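/- arXiv:1502.01802 — 11 statements merged into one kernel-verified Lean document; each statement's English description precedes it below -/
import Mathlib

section
/- Conjugate scaling bound: Let f : ℝ^n → ℝ and τ > 1 be such that f(δx) ≤ δ^τ·f(x) for all x ∈ ℝ^n_+ and all δ ≥ 1. Then for every 0 < γ ≤ 1 and every z ∈ ℝ^n_+, the conjugate over the nonnegative orthant satisfies f*(γz) ≤ γ^{τ/(τ−1)} · f*(z) (the inequality holding in the extended reals if the suprema are infinite). -/
/-- The conjugate of `f` over the nonnegative orthant, valued in the extended
reals: `f*(z) = sup_{x ≥ 0} (⟨x, z⟩ - f x)`. -/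
noncomputable def conjE {n : ℕ} (f : (Fin n → ℝ) → ℝ) (z : Fin n → ℝ) : EReal :=
  ⨆ x : {x : Fin n → ℝ // ∀ i, 0 ≤ x i}, (((∑ i, x.1 i * z i) - f x.1 : ℝ) : EReal)

/-- **Conjugate scaling bound.**
If `f(δx) ≤ δ^τ · f(x)` for all `x ≥ 0` and `δ ≥ 1` (with `τ > 1`), then for
`0 < γ ≤ 1` and `z ≥ 0`, the conjugate over the nonnegative orthant satisfies
`f*(γz) ≤ γ^{τ/(τ−1)} · f*(z)` in the extended reals. -/
theorem stmt_2 {n : ℕ} (f : (Fin n → ℝ) → ℝ) (τ : ℝ) (hτ : 1 < τ)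
    (hscale : ∀ x : Fin n → ℝ, (∀ i, 0 ≤ x i) → ∀ δ : ℝ, 1 ≤ δ →
      f (δ • x) ≤ δ ^ τ * f x)
    (γ : ℝ) (hγ0 : 0 < γ) (hγ1 : γ ≤ 1)
    (z : Fin n → ℝ) (hz : ∀ i, 0 ≤ z i) :
    conjE f (γ • z) ≤ ((γ ^ (τ / (τ - 1)) : ℝ) : EReal) * conjE f z := by
  have hτ1 : (0:ℝ) < τ - 1 := by linarith
  set c : ℝ := γ ^ (τ / (τ - 1)) with hc
  set δ : ℝ := γ ^ (-(1 / (τ - 1))) with hδdef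
  have hδ1 : 1 ≤ δ := by
    exact Real.one_le_rpow_of_pos_of_le_one_of_nonpos hγ0 hγ1
      (neg_nonpos.mpr (le_of_lt (div_pos one_pos hτ1)))
  have hδpos : (0:ℝ) < δ := lt_of_lt_of_le one_pos hδ1
  have hcδ : c * δ = γ := by
    rw [hc, hδdef, ← Real.rpow_add hγ0]
    have : τ / (τ - 1) + -(1 / (τ - 1)) = 1 := by field_simp; try ring
    rw [this, Real.rpow_one]
  have hcδτ : c * δ ^ τ = 1 := by
    rw [hc, hδdef, ← Real.rpow_mul (le_of_lt hγ0), ← Real.rpow_add hγ0]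
    have : τ / (τ - 1) + -(1 / (τ - 1)) * τ = 0 := by field_simp; try ring
    rw [this, Real.rpow_zero]
  have hcpos : (0:ℝ) < c := Real.rpow_pos_of_pos hγ0 _
  rw [conjE]
  apply iSup_le
  intro x
  -- substitute y = δ • x
  have hy : ∀ i, 0 ≤ (δ • x.1) i := fun i => mul_nonneg (le_of_lt hδpos) (x.2 i)
  have hfy : f (δ • x.1) ≤ δ ^ τ * f x.1 := hscale x.1 x.2 δ hδ1
  have key : ((∑ i, x.1 i * (γ • z) i) - f x.1 : ℝ)
      ≤ c * ((∑ i, (δ • x.1) i * z i) - f (δ • x.1)) := by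
    have hsum1 : (∑ i, x.1 i * (γ • z) i) = γ * ∑ i, x.1 i * z i := by
      rw [Finset.mul_sum]; apply Finset.sum_congr rfl; intro i _
      simp [Pi.smul_apply, smul_eq_mul]; ring
    have hsum2 : (∑ i, (δ • x.1) i * z i) = δ * ∑ i, x.1 i * z i := by
      rw [Finset.mul_sum]; apply Finset.sum_congr rfl; intro i _
      simp [Pi.smul_apply, smul_eq_mul]; ring
    rw [hsum1, hsum2]
    have h1 : c * f (δ • x.1) ≤ c * (δ ^ τ * f x.1) :=
      mul_le_mul_of_nonneg_left hfy (le_of_lt hcpos)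
    have h2 : c * (δ ^ τ * f x.1) = f x.1 := by rw [← mul_assoc, hcδτ, one_mul]
    have h3 : c * f (δ • x.1) ≤ f x.1 := h2 ▸ h1
    have h4 : c * (δ * (∑ i, x.1 i * z i) - f (δ • x.1))
        = γ * (∑ i, x.1 i * z i) - c * f (δ • x.1) := by
      rw [mul_sub, ← mul_assoc, hcδ]
    rw [h4]; linarith
  calc (((∑ i, x.1 i * (γ • z) i) - f x.1 : ℝ) : EReal)
      ≤ ((c * ((∑ i, (δ • x.1) i * z i) - f (δ • x.1)) : ℝ) : EReal) :=
        EReal.coe_le_coe_iff.mpr key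
    _ = (c : EReal) * (((∑ i, (δ • x.1) i * z i) - f (δ • x.1) : ℝ) : EReal) :=
        EReal.coe_mul _ _
    _ ≤ (c : EReal) * conjE f z := by
        apply mul_le_mul_of_nonneg_left _ (by exact_mod_cast le_of_lt hcpos)
        exact le_iSup (fun (x : {x : Fin n → ℝ // ∀ i, 0 ≤ x i}) =>
          (((∑ i, x.1 i * z i) - f x.1 : ℝ) : EReal)) ⟨δ • x.1, hy⟩
end

section
/- Conjugate at a scaled gradient: Let f : ℝ^n → ℝ be differentiable and convex on the nonnegative orthant, let τ > 1 satisfy both ⟨∇f(w), w⟩ ≤ τ·f(w) for all w ∈ ℝ^n_+ and f(δw) ≤ δ^τ·f(w) for all w ∈ ℝ^n_+ and δ ≥ 1. Then for every x ∈ ℝ^n_+ and every 0 < γ ≤ 1, the conjugate over the nonnegative orthant satisfies f*(γ·∇f(x)) ≤ γ^{τ/(τ−1)} · (τ − 1) · f(x). -/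
/-- Gradient inequality for convex differentiable functions. -/
lemma grad_ineq {E : Type*} [NormedAddCommGroup E] [NormedSpace ℝ E]
    {s : Set E} {f : E → ℝ} (hconv : ConvexOn ℝ s f)
    {x z : E} (hx : x ∈ s) (hz : z ∈ s) (hd : DifferentiableAt ℝ f x) :
    f x + fderiv ℝ f x (z - x) ≤ f z := by
  set D := fderiv ℝ f x with hD
  have hline : ∀ t : ℝ, HasDerivAt (fun t : ℝ => x + t • (z - x)) (z - x) t := by
    intro t
    simpa using ((hasDerivAt_id t).smul_const (z - x)).const_add x
  set φ : ℝ → ℝ := fun t => f (x + t • (z - x)) with hφ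
  have hφconv : ConvexOn ℝ (Set.Icc (0:ℝ) 1) φ := by
    have hmap : ConvexOn ℝ ((AffineMap.lineMap x z : ℝ →ᵃ[ℝ] E) ⁻¹' s)
        (f ∘ (AffineMap.lineMap x z : ℝ →ᵃ[ℝ] E)) := hconv.comp_affineMap _
    have hsub : Set.Icc (0:ℝ) 1 ⊆ (AffineMap.lineMap x z : ℝ →ᵃ[ℝ] E) ⁻¹' s := by
      intro t ht
      have hmem := hconv.1 hx hz (by linarith [ht.1, ht.2] : (0:ℝ) ≤ 1 - t) ht.1 (by ring)
      simp only [Set.mem_preimage, AffineMap.lineMap_apply, vsub_eq_sub, vadd_eq_add]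
      have h2 : t • (z - x) + x = (1 - t) • x + t • z := by module
      rw [h2]; exact hmem
    have := hmap.subset hsub (convex_Icc 0 1)
    convert this using 1
    funext t
    simp only [hφ, Function.comp_apply, AffineMap.lineMap_apply, vsub_eq_sub, vadd_eq_add]
    congr 1
    module
  have hderiv : HasDerivAt φ (D (z - x)) 0 := by
    have h0 : HasFDerivAt f D (x + (0:ℝ) • (z - x)) := by
      simpa using hd.hasFDerivAt
    exact h0.comp_hasDerivAt 0 (hline 0)
  have hslope := hφconv.le_slope_of_hasDerivAt (by simp : (0:ℝ) ∈ Set.Icc (0:ℝ) 1)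
    (by simp : (1:ℝ) ∈ Set.Icc (0:ℝ) 1) one_pos hderiv
  have : D (z - x) ≤ φ 1 - φ 0 := by
    simpa [slope_def_field] using hslope
  simp only [hφ, one_smul, zero_smul, add_zero, add_sub_cancel] at this
  linarith

lemma fderiv_sum_single {n : ℕ} (D : (Fin n → ℝ) →L[ℝ] ℝ) (v : Fin n → ℝ) :
    D v = ∑ i, v i * D (Pi.single i 1) := by
  calc D v = D (∑ i, Pi.single i (v i)) := by rw [Finset.univ_sum_single]
    _ = ∑ i, D (Pi.single i (v i)) := map_sum D _ _
    _ = ∑ i, v i * D (Pi.single i 1) := by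
        refine Finset.sum_congr rfl fun i _ => ?_
        have h : Pi.single i (v i) = v i • (Pi.single i 1 : Fin n → ℝ) := by
          funext j
          rcases eq_or_ne j i with rfl | hj
          · simp
          · simp [Pi.single_eq_of_ne hj]
        rw [h, map_smul, smul_eq_mul]

/-- **Conjugate at a scaled gradient.**
If `f` is differentiable and convex on the nonnegative orthant, `τ > 1`
satisfies `⟨∇f(w), w⟩ ≤ τ · f(w)` for all `w ≥ 0` and `f(δw) ≤ δ^τ · f(w)` for
all `w ≥ 0` and `δ ≥ 1`, then for every `x ≥ 0` and `0 < γ ≤ 1`: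
`f*(γ · ∇f(x)) ≤ γ^{τ/(τ−1)} · (τ − 1) · f(x)`. -/

theorem stmt_4 {n : ℕ} (f : (Fin n → ℝ) → ℝ) (τ : ℝ) (hτ : 1 < τ)
    (hdiff : ∀ w : Fin n → ℝ, (∀ i, 0 ≤ w i) → DifferentiableAt ℝ f w)
    (hconv : ConvexOn ℝ {x : Fin n → ℝ | ∀ i, 0 ≤ x i} f)
    (hgrad : ∀ w : Fin n → ℝ, (∀ i, 0 ≤ w i) →
      ∑ i, fderiv ℝ f w (Pi.single i 1) * w i ≤ τ * f w)
    (hscale : ∀ w : Fin n → ℝ, (∀ i, 0 ≤ w i) → ∀ δ : ℝ, 1 ≤ δ →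
      f (δ • w) ≤ δ ^ τ * f w)
    (x : Fin n → ℝ) (hx : ∀ i, 0 ≤ x i)
    (γ : ℝ) (hγ0 : 0 < γ) (hγ1 : γ ≤ 1) :
    conjE f (fun i => γ * fderiv ℝ f x (Pi.single i 1)) ≤
      ((γ ^ (τ / (τ - 1)) * (τ - 1) * f x : ℝ) : EReal) := by
  have hτ1 : (0:ℝ) < τ - 1 := by linarith
  set D := fderiv ℝ f x with hD
  set e : ℝ := -(τ - 1)⁻¹ with he
  set t : ℝ := γ ^ e with ht
  have ht0 : 0 < t := Real.rpow_pos_of_pos hγ0 e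
  have ht1 : 1 ≤ t :=
    Real.one_le_rpow_of_pos_of_le_one_of_nonpos hγ0 hγ1
      (by rw [he]; simp [inv_nonneg.mpr hτ1.le])
  set c : ℝ := γ ^ (τ / (τ - 1)) with hc
  have hc0 : 0 < c := Real.rpow_pos_of_pos hγ0 _
  have hct : c * t = γ := by
    rw [hc, ht, ← Real.rpow_add hγ0]
    have h : τ / (τ - 1) + e = 1 := by rw [he]; field_simp; ring
    rw [h, Real.rpow_one]
  have hctτ : c * t ^ τ = 1 := by
    rw [hc, ht, ← Real.rpow_mul hγ0.le, ← Real.rpow_add hγ0]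
    have h : τ / (τ - 1) + e * τ = 0 := by rw [he]; field_simp; ring
    rw [h, Real.rpow_zero]
  rw [conjE]
  apply iSup_le
  rintro ⟨y, hy⟩
  rw [EReal.coe_le_coe_iff]
  have hty : ∀ i, 0 ≤ (t • y) i := by
    intro i
    simpa using mul_nonneg ht0.le (hy i)
  have hgi := grad_ineq hconv (Set.mem_setOf.mpr hx) (Set.mem_setOf.mpr hty) (hdiff x hx)
  have hsc := hscale y hy t ht1
  have hgx := hgrad x hx
  have hDx : D x = ∑ i, D (Pi.single i 1) * x i := by
    rw [fderiv_sum_single]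
    exact Finset.sum_congr rfl fun i _ => mul_comm _ _
  have hDty : D (t • y) = t * ∑ i, y i * D (Pi.single i 1) := by
    rw [map_smul, smul_eq_mul]
    congr 1
    exact fderiv_sum_single D y
  have hsub : D (t • y - x) = D (t • y) - D x := map_sub D _ _
  set S : ℝ := ∑ i, y i * D (Pi.single i 1) with hS
  have key : t * S ≤ t ^ τ * f y + (τ - 1) * f x := by
    rw [← hD] at hgi hgx
    rw [hsub, hDty, hDx] at hgi
    linarith
  have key2 : c * (t * S) ≤ c * (t ^ τ * f y + (τ - 1) * f x) :=
    mul_le_mul_of_nonneg_left key hc0.le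
  have hlhs : ∑ i, y i * (γ * D (Pi.single i 1)) = γ * S := by
    rw [hS, Finset.mul_sum]
    exact Finset.sum_congr rfl fun i _ => by ring
  rw [hlhs]
  have hfin : γ * S ≤ f y + c * ((τ - 1) * f x) := by
    calc γ * S = c * (t * S) := by rw [← hct]; ring
      _ ≤ c * (t ^ τ * f y + (τ - 1) * f x) := key2
      _ = (c * t ^ τ) * f y + c * ((τ - 1) * f x) := by ring
      _ = f y + c * ((τ - 1) * f x) := by rw [hctτ]; ring
  linarith
end

section
/- Leading pure-power terms in convex homogeneous polynomials: Let f be a real polynomial in n variables that is homogeneous of degree τ ≥ 2, has nonnegative coefficients, and whose evaluation function is convex on the nonnegative orthant ℝ^n_+. If for some index i there is a monomial of f with positive coefficient in which the variable x_i appears with positive degree, then the coefficient of the monomial x_i^τ in f is positive. -/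
/-- **Leading pure-power terms in convex homogeneous polynomials.**
Let `f` be a real polynomial in `n` variables, homogeneous of degree `τ ≥ 2`,
with nonnegative coefficients, whose evaluation is convex on the nonnegative
orthant. If some monomial of `f` with positive coefficient involves `x_i`
(with positive degree), then the coefficient of `x_i^τ` in `f` is positive. -/
theorem stmt_5 {n : ℕ} (τ : ℕ) (hτ : 2 ≤ τ) (f : MvPolynomial (Fin n) ℝ)
    (hhom : f.IsHomogeneous τ)
    (hcoeff : ∀ d : Fin n →₀ ℕ, 0 ≤ f.coeff d)
    (hconv : ConvexOn ℝ {x : Fin n → ℝ | ∀ i, 0 ≤ x i}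
      (fun x => MvPolynomial.eval x f))
    (i : Fin n) (hdep : ∃ d : Fin n →₀ ℕ, 0 < f.coeff d ∧ 0 < d i) :
    0 < f.coeff (Finsupp.single i τ) := by
  obtain ⟨d, hd, hdi⟩ := hdep
  by_contra hc
  have h0 : f.coeff (Finsupp.single i τ) = 0 := le_antisymm (not_lt.mp hc) (hcoeff _)
  -- evaluation is nonnegative on the orthant
  have hterm : ∀ (x : Fin n → ℝ), (∀ m, 0 ≤ x m) → ∀ e : Fin n →₀ ℕ,
      (0:ℝ) ≤ f.coeff e * ∏ m, x m ^ e m := fun x hx e =>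
    mul_nonneg (hcoeff e) (Finset.prod_nonneg fun m _ => pow_nonneg (hx m) _)
  have hpos : ∀ x : Fin n → ℝ, (∀ m, 0 ≤ x m) → 0 ≤ MvPolynomial.eval x f := by
    intro x hx
    rw [MvPolynomial.eval_eq']
    exact Finset.sum_nonneg fun e _ => hterm x hx e
  have hlow : ∀ x : Fin n → ℝ, (∀ m, 0 ≤ x m) →
      f.coeff d * ∏ m, x m ^ d m ≤ MvPolynomial.eval x f := by
    intro x hx
    rw [MvPolynomial.eval_eq']
    exact Finset.single_le_sum (fun e _ => hterm x hx e)
      (MvPolynomial.mem_support_iff.mpr hd.ne')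
  -- f vanishes on the i-th axis
  have haxis : ∀ t : ℝ,
      MvPolynomial.eval (fun m => if m = i then t else 0) f = 0 := by
    intro t
    rw [MvPolynomial.eval_eq']
    apply Finset.sum_eq_zero
    intro e he
    by_cases hei : e = Finsupp.single i τ
    · rw [hei, h0, zero_mul]
    · have hex : ∃ m, m ≠ i ∧ 0 < e m := by
        by_contra hno
        push_neg at hno
        have hzero : ∀ m, m ≠ i → e m = 0 := fun m hm => Nat.le_zero.mp (hno m hm)
        have hesingle : e = Finsupp.single i (e i) := by
          ext m
          by_cases hm : m = i
          · subst hm; simp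
          · simp [Finsupp.single_apply, Ne.symm hm, hzero m hm]
        have hdeg := hhom (MvPolynomial.mem_support_iff.mp he)
        rw [hesingle, Finsupp.weight_apply, Finsupp.sum_single_index] at hdeg
        · simp only [Pi.one_apply, smul_eq_mul, mul_one] at hdeg
          exact hei (hesingle.trans (by rw [hdeg]))
        · simp
      obtain ⟨m, hm, hem⟩ := hex
      have hz : (if m = i then t else 0) ^ e m = 0 := by
        rw [if_neg hm]; exact zero_pow hem.ne'
      rw [Finset.prod_eq_zero (Finset.mem_univ m) hz, mul_zero]
  set c := f.coeff d with hcdef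
  set C := MvPolynomial.eval (fun _ => (2:ℝ)) f with hCdef
  have hC0 : 0 ≤ C := hpos _ (fun _ => by norm_num)
  -- pick s large
  set s : ℝ := C / (2 * c) with hsdef
  have hs0 : 0 ≤ s := div_nonneg hC0 (by positivity)
  -- convexity at the midpoint of 2s·e_i and 2·𝟙
  have hx : (fun m => if m = i then 2 * s else 0) ∈ {x : Fin n → ℝ | ∀ i, 0 ≤ x i} := by
    intro m; dsimp only; split
    · positivity
    · exact le_rfl
  have hy : (fun _ : Fin n => (2:ℝ)) ∈ {x : Fin n → ℝ | ∀ i, 0 ≤ x i} := by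
    intro m; norm_num
  have hconvle := hconv.2 hx hy (by norm_num : (0:ℝ) ≤ 1/2)
    (by norm_num : (0:ℝ) ≤ 1/2) (by norm_num)
  have hmid : ((1/2 : ℝ) • (fun m => if m = i then 2 * s else 0)
      + (1/2 : ℝ) • (fun _ : Fin n => (2:ℝ)))
      = fun m => if m = i then s + 1 else 1 := by
    funext m
    simp only [Pi.add_apply, Pi.smul_apply, smul_eq_mul]
    split <;> ring
  rw [hmid] at hconvle
  simp only [smul_eq_mul] at hconvle
  rw [haxis (2 * s)] at hconvle
  simp only [mul_zero, zero_add] at hconvle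
  -- lower bound on the midpoint value
  have hmidnn : ∀ m, (0:ℝ) ≤ if m = i then s + 1 else 1 := by
    intro m; split
    · positivity
    · norm_num
  have hprod : ∏ m, (if m = i then s + 1 else 1 : ℝ) ^ d m = (s + 1) ^ d i := by
    rw [Fintype.prod_eq_single i (fun m hm => by rw [if_neg hm, one_pow])]
    rw [if_pos rfl]
  have hlow2 := hlow _ hmidnn
  rw [hprod] at hlow2
  have hpow : (s + 1 : ℝ) ≤ (s + 1) ^ d i :=
    le_self_pow₀ (by linarith) hdi.ne'
  have hchain : c * (s + 1) ≤ 1/2 * C := by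
    calc c * (s + 1) ≤ c * (s + 1) ^ d i := by
          exact mul_le_mul_of_nonneg_left hpow hd.le
      _ ≤ MvPolynomial.eval (fun m => if m = i then s + 1 else 1) f := hlow2
      _ ≤ 1/2 * C := hconvle
  have : c * (s + 1) = 1/2 * C + c := by
    rw [hsdef]; field_simp
  linarith
end

section
/- Non-convexity of truncated homogeneous bivariate polynomials: Let τ ≥ 2 and 1 ≤ d ≤ τ − 1 be integers, and let b_0, b_1, …, b_d be nonnegative reals with b_d > 0. Then the bivariate polynomial g(x, y) = ∑_{j=0}^{d} b_j · x^j · y^{τ−j} is NOT convex on the open positive quadrant {(x, y) ∈ ℝ² : x > 0, y > 0}. -/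
open Filter Topology

set_option maxHeartbeats 1000000 in
/-- **Non-convexity of truncated homogeneous bivariate polynomials.**
For integers `τ ≥ 2` and `1 ≤ d ≤ τ − 1`, and nonnegative reals
`b_0, …, b_d` with `b_d > 0`, the polynomial
`g(x, y) = ∑_{j=0}^{d} b_j x^j y^{τ−j}` is not convex on the open positive
quadrant. -/
theorem stmt_6 (τ d : ℕ) (hτ : 2 ≤ τ) (hd1 : 1 ≤ d) (hd2 : d ≤ τ - 1)
    (b : ℕ → ℝ) (hb : ∀ j ≤ d, 0 ≤ b j) (hbd : 0 < b d) :
    ¬ ConvexOn ℝ {p : ℝ × ℝ | 0 < p.1 ∧ 0 < p.2}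
      (fun p : ℝ × ℝ => ∑ j ∈ Finset.range (d + 1), b j * p.1 ^ j * p.2 ^ (τ - j)) := by
  intro hconv
  set g : ℝ × ℝ → ℝ :=
    fun p : ℝ × ℝ => ∑ j ∈ Finset.range (d + 1), b j * p.1 ^ j * p.2 ^ (τ - j) with hg
  set C : ℝ := ∑ j ∈ Finset.range (d + 1), b j with hC
  have hCnn : 0 ≤ C :=
    Finset.sum_nonneg fun j hj => hb j (Finset.mem_range_succ_iff.mp hj)
  -- the key convexity inequality for R > 1
  have key : ∀ R : ℝ, 1 < R →
      g ((R⁻¹) • ((R : ℝ), (R ^ τ)⁻¹) + (1 - R⁻¹) • ((1:ℝ), (1:ℝ)))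
        ≤ R⁻¹ * g (R, (R ^ τ)⁻¹) + (1 - R⁻¹) * g (1, 1) := by
    intro R hR
    have hR0 : (0:ℝ) < R := lt_trans one_pos hR
    have h1 : (0:ℝ) < R⁻¹ := by positivity
    have h2 : (0:ℝ) ≤ 1 - R⁻¹ := by
      have : R⁻¹ ≤ 1 := by
        rw [inv_le_one_iff₀]; right; linarith
      linarith
    exact hconv.2 (x := ((R : ℝ), (R ^ τ)⁻¹)) (y := ((1:ℝ), (1:ℝ)))
      ⟨hR0, by positivity⟩ ⟨one_pos, one_pos⟩ h1.le h2 (by ring)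
  -- bound on g (R, (R^τ)⁻¹) for R ≥ 1
  have bound : ∀ R : ℝ, 1 ≤ R → g (R, (R ^ τ)⁻¹) ≤ C * R⁻¹ := by
    intro R hR
    have hR0 : (0:ℝ) < R := lt_of_lt_of_le one_pos hR
    have h1 : g (R, (R ^ τ)⁻¹) ≤ ∑ j ∈ Finset.range (d + 1), b j * (R ^ (τ - 1) * (R ^ τ)⁻¹) := by
      apply Finset.sum_le_sum
      intro j hj
      have hjd : j ≤ d := Finset.mem_range_succ_iff.mp hj
      have hbj : 0 ≤ b j := hb j hjd
      have hx : R ^ j ≤ R ^ (τ - 1) := pow_le_pow_right₀ hR (by omega)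
      have hyle1 : (R ^ τ)⁻¹ ≤ 1 := by
        rw [inv_le_one_iff₀]; right; exact one_le_pow₀ hR
      have hynn : (0:ℝ) ≤ (R ^ τ)⁻¹ := by positivity
      have hy : ((R ^ τ)⁻¹) ^ (τ - j) ≤ (R ^ τ)⁻¹ := by
        calc ((R ^ τ)⁻¹) ^ (τ - j) ≤ ((R ^ τ)⁻¹) ^ 1 :=
              pow_le_pow_of_le_one hynn hyle1 (by omega)
          _ = (R ^ τ)⁻¹ := pow_one _
      calc b j * R ^ j * ((R ^ τ)⁻¹) ^ (τ - j)
          ≤ b j * R ^ (τ - 1) * ((R ^ τ)⁻¹) ^ (τ - j) :=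
            mul_le_mul_of_nonneg_right (mul_le_mul_of_nonneg_left hx hbj) (by positivity)
        _ ≤ b j * R ^ (τ - 1) * (R ^ τ)⁻¹ :=
            mul_le_mul_of_nonneg_left hy (by positivity)
        _ = b j * (R ^ (τ - 1) * (R ^ τ)⁻¹) := by ring
    have h2 : R ^ (τ - 1) * (R ^ τ)⁻¹ = R⁻¹ := by
      have hτ' : R ^ τ = R ^ (τ - 1) * R := by
        rw [← pow_succ]; congr 1; omega
      rw [hτ']
      field_simp
    calc g (R, (R ^ τ)⁻¹) ≤ ∑ j ∈ Finset.range (d + 1), b j * (R ^ (τ - 1) * (R ^ τ)⁻¹) := h1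
      _ = C * (R ^ (τ - 1) * (R ^ τ)⁻¹) := by rw [hC, Finset.sum_mul]
      _ = C * R⁻¹ := by rw [h2]
  have hgnn : ∀ R : ℝ, 1 ≤ R → 0 ≤ g (R, (R ^ τ)⁻¹) := by
    intro R hR
    have hR0 : (0:ℝ) < R := lt_of_lt_of_le one_pos hR
    apply Finset.sum_nonneg
    intro j hj
    have hbj := hb j (Finset.mem_range_succ_iff.mp hj)
    positivity
  -- continuity of g
  have hgc : Continuous g := by
    apply continuous_finset_sum
    intro j _
    fun_prop
  -- basic limits
  have hinv : Tendsto (fun R : ℝ => R⁻¹) atTop (𝓝 0) := tendsto_inv_atTop_zero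
  have hinvτ : Tendsto (fun R : ℝ => (R ^ τ)⁻¹) atTop (𝓝 0) :=
    (tendsto_pow_atTop (by omega)).inv_tendsto_atTop
  -- limit of the combination point
  have hfst : Tendsto (fun R : ℝ => 2 - R⁻¹) atTop (𝓝 2) := by
    simpa using tendsto_const_nhds.sub hinv
  have hsnd : Tendsto (fun R : ℝ => R⁻¹ * (R ^ τ)⁻¹ + (1 - R⁻¹)) atTop (𝓝 1) := by
    have := (hinv.mul hinvτ).add ((tendsto_const_nhds (X := ℝ) (α := ℝ) (x := 1)).sub hinv)
    simpa using this
  have hpt : Tendsto (fun R : ℝ => (R⁻¹) • ((R : ℝ), (R ^ τ)⁻¹) + (1 - R⁻¹) • ((1:ℝ), (1:ℝ)))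
      atTop (𝓝 ((2:ℝ), (1:ℝ))) := by
    apply (hfst.prodMk_nhds hsnd).congr'
    filter_upwards [eventually_gt_atTop (0:ℝ)] with R hR
    have hRne : R ≠ 0 := ne_of_gt hR
    simp only [Prod.smul_mk, smul_eq_mul, Prod.mk_add_mk, Prod.mk.injEq]
    constructor
    · field_simp; ring
    · ring
  have hL : Tendsto (fun R : ℝ => g ((R⁻¹) • ((R : ℝ), (R ^ τ)⁻¹) + (1 - R⁻¹) • ((1:ℝ), (1:ℝ))))
      atTop (𝓝 (g (2, 1))) := (hgc.tendsto _).comp hpt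
  -- limit of the right-hand side
  have hz : Tendsto (fun R : ℝ => R⁻¹ * g (R, (R ^ τ)⁻¹)) atTop (𝓝 0) := by
    apply squeeze_zero' (g := fun R : ℝ => C * (R⁻¹ * R⁻¹))
    · filter_upwards [eventually_ge_atTop (1:ℝ)] with R hR
      have hR0 : (0:ℝ) < R := lt_of_lt_of_le one_pos hR
      exact mul_nonneg (by positivity) (hgnn R hR)
    · filter_upwards [eventually_ge_atTop (1:ℝ)] with R hR
      have hR0 : (0:ℝ) < R := lt_of_lt_of_le one_pos hR
      calc R⁻¹ * g (R, (R ^ τ)⁻¹) ≤ R⁻¹ * (C * R⁻¹) :=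
            mul_le_mul_of_nonneg_left (bound R hR) (by positivity)
        _ = C * (R⁻¹ * R⁻¹) := by ring
    · simpa using (hinv.mul hinv).const_mul C
  have hR : Tendsto (fun R : ℝ => R⁻¹ * g (R, (R ^ τ)⁻¹) + (1 - R⁻¹) * g (1, 1))
      atTop (𝓝 (g (1, 1))) := by
    have := hz.add ((((tendsto_const_nhds (X := ℝ) (α := ℝ) (x := 1)).sub hinv)).mul
      (tendsto_const_nhds (x := g (1, 1))))
    simpa using this
  -- conclude g (2,1) ≤ g (1,1)
  have hle : g (2, 1) ≤ g (1, 1) := by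
    apply le_of_tendsto_of_tendsto hL hR
    filter_upwards [eventually_gt_atTop (1:ℝ)] with R hR
    exact key R hR
  -- but g (1,1) < g (2,1)
  have hlt : g (1, 1) < g (2, 1) := by
    simp only [hg, one_pow, mul_one]
    apply Finset.sum_lt_sum
    · intro j hj
      have hbj := hb j (Finset.mem_range_succ_iff.mp hj)
      have : (1:ℝ) ≤ 2 ^ j := one_le_pow₀ (by norm_num)
      nlinarith
    · refine ⟨d, Finset.self_mem_range_succ d, ?_⟩
      have : (1:ℝ) < 2 ^ d := one_lt_pow₀ (by norm_num) (by omega)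
      nlinarith
  linarith
end

section
/- Approximation of a convex homogeneous polynomial by a more convex surrogate: Let n ≥ 4 and τ ≥ 1 be integers and 0 < λ ≤ 1. Let f(x) = ∑_{d ∈ D} c_d · ∏_i x_i^{d_i} be a polynomial with all c_d > 0, homogeneous of degree τ (∑_i d_i = τ for every d ∈ D), whose evaluation is convex on ℝ^n_+, and such that for every i ∈ {1, …, n} the exponent vector τ·e_i belongs to D; write c_i := c_{τ e_i} > 0 and α_i := c_i^{1/τ}. Define f̂(x) := ∑_{d ∈ D} c_d · (∏_i α_i^{λ d_i}) · ∏_i x_i^{(1+λ) d_i}. Then for all x ∈ ℝ^n_+: (1/(2 n^{2τλ})) · f̂(x) ≤ f(x)^{1+λ} ≤ n^{λτ} · f̂(x). -/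
/-- **Approximation of a convex homogeneous polynomial by a more convex
surrogate.**
Let `n ≥ 4`, `τ ≥ 1`, `0 < λ ≤ 1`, and let
`f(x) = ∑_{d ∈ D} c_d ∏_i x_i^{d_i}` have positive coefficients, be
homogeneous of degree `τ`, have convex evaluation on the nonnegative orthant,
and contain every pure power `x_i^τ` (with coefficient `c_i > 0`). With
`α_i := c_i^{1/τ}` and
`f̂(x) := ∑_{d ∈ D} c_d (∏_i α_i^{λ d_i}) ∏_i x_i^{(1+λ) d_i}`, one has, for
all `x ≥ 0`,
`(1/(2 n^{2τλ})) f̂(x) ≤ f(x)^{1+λ} ≤ n^{λτ} f̂(x)`. -/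
theorem stmt_9 {n : ℕ} (hn : 4 ≤ n) (τ : ℕ) (hτ : 1 ≤ τ)
    (lam : ℝ) (hlam0 : 0 < lam) (hlam1 : lam ≤ 1)
    (D : Finset (Fin n → ℕ)) (c : (Fin n → ℕ) → ℝ)
    (hc : ∀ d ∈ D, 0 < c d)
    (hhom : ∀ d ∈ D, ∑ i, d i = τ)
    (f : (Fin n → ℝ) → ℝ)
    (hf : f = fun x => ∑ d ∈ D, c d * ∏ i, x i ^ (d i))
    (hconv : ConvexOn ℝ {x : Fin n → ℝ | ∀ i, 0 ≤ x i} f)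
    (hpure : ∀ i : Fin n, (fun j => if j = i then τ else 0) ∈ D)
    (α : Fin n → ℝ)
    (hα : ∀ i, α i = c (fun j => if j = i then τ else 0) ^ ((1 : ℝ) / τ))
    (fhat : (Fin n → ℝ) → ℝ)
    (hfhat : fhat = fun x => ∑ d ∈ D,
      c d * (∏ i, α i ^ (lam * (d i : ℝ))) * ∏ i, x i ^ ((1 + lam) * (d i : ℝ)))
    (x : Fin n → ℝ) (hx : ∀ i, 0 ≤ x i) :
    (1 / (2 * (n : ℝ) ^ (2 * (τ : ℝ) * lam))) * fhat x ≤ f x ^ (1 + lam) ∧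
      f x ^ (1 + lam) ≤ (n : ℝ) ^ (lam * (τ : ℝ)) * fhat x := by
  have hτ0 : (τ : ℝ) ≠ 0 := by positivity
  have hcpos : ∀ i : Fin n, 0 < c (fun j => if j = i then τ else 0) :=
    fun i => hc _ (hpure i)
  have hαpos : ∀ i, 0 < α i := by
    intro i; rw [hα i]; exact Real.rpow_pos_of_pos (hcpos i) _
  -- pure powers: α i ^ τ = c (τ e_i)
  have hcατ : ∀ i, α i ^ τ = c (fun j => if j = i then τ else 0) := by
    intro i
    rw [hα i, ← Real.rpow_natCast (_ ^ _) τ, ← Real.rpow_mul (hcpos i).le,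
      one_div, inv_mul_cancel₀ hτ0, Real.rpow_one]
  -- evaluation on rays
  have hray : ∀ (i : Fin n) (t : ℝ),
      f (fun j => if j = i then t else 0) = c (fun j => if j = i then τ else 0) * t ^ τ := by
    intro i t
    rw [hf]
    simp only
    rw [Finset.sum_eq_single (fun j => if j = i then τ else 0)]
    · congr 1
      rw [Finset.prod_eq_single i]
      · simp
      · intro j _ hj; simp [hj]
      · simp
    · intro d hd hne
      have : ∃ j, j ≠ i ∧ d j ≠ 0 := by
        by_contra hcon
        push_neg at hcon
        apply hne
        funext j
        by_cases hji : j = i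
        · subst hji
          have := hhom d hd
          rw [Finset.sum_eq_single j] at this
          · simp [this]
          · intro b _ hb; exact hcon b hb
          · simp
        · simp [hji, hcon j hji]
      obtain ⟨j, hji, hdj⟩ := this
      have : (∏ k, (if k = i then t else 0) ^ d k) = 0 := by
        apply Finset.prod_eq_zero (Finset.mem_univ j)
        simp [hji, zero_pow hdj]
      rw [this, mul_zero]
    · intro h; exact absurd (hpure i) h
  -- nonnegativity of f on the orthant
  have hfnn : ∀ z : Fin n → ℝ, (∀ i, 0 ≤ z i) → 0 ≤ f z := by
    intro z hz
    rw [hf]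
    apply Finset.sum_nonneg
    intro d hd
    exact mul_nonneg (hc d hd).le (Finset.prod_nonneg fun i _ => pow_nonneg (hz i) _)
  -- key upper bound from convexity: f z ≤ (∑ α i * z i) ^ τ
  have hkey : ∀ z : Fin n → ℝ, (∀ i, 0 ≤ z i) → f z ≤ (∑ i, α i * z i) ^ τ := by
    intro z hz
    set s := ∑ i, α i * z i with hs
    have hsnn : ∀ i : Fin n, 0 ≤ α i * z i := fun i => mul_nonneg (hαpos i).le (hz i)
    rcases eq_or_lt_of_le (Finset.sum_nonneg fun i _ => hsnn i) with hs0 | hs0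
    · -- s = 0 : all z i = 0, f z = 0
      have hz0 : ∀ i, z i = 0 := by
        intro i
        have := (Finset.sum_eq_zero_iff_of_nonneg (fun i _ => hsnn i)).mp hs0.symm i (Finset.mem_univ i)
        exact (mul_eq_zero.mp this).resolve_left (hαpos i).ne'
      have hfz : f z = 0 := by
        rw [hf]
        apply Finset.sum_eq_zero
        intro d hd
        have : ∃ j, d j ≠ 0 := by
          by_contra hcon
          push_neg at hcon
          have := hhom d hd
          simp [hcon] at this
          omega
        obtain ⟨j, hj⟩ := this
        have : (∏ k, z k ^ d k) = 0 :=
          Finset.prod_eq_zero (Finset.mem_univ j) (by rw [hz0 j]; exact zero_pow hj)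
        rw [this, mul_zero]
      rw [hfz]
      exact pow_nonneg hs0.le τ
    · -- s > 0 : Jensen
      have hxeq : z = ∑ i, (α i * z i / s) • (fun j => if j = i then s / α i else 0) := by
        funext j
        rw [Finset.sum_apply]
        simp only [Pi.smul_apply, smul_eq_mul]
        rw [Finset.sum_eq_single j]
        · simp only [if_true]
          have hzj : α j * z j * s = z j * (s * α j) := by ring
          rw [div_mul_div_comm, hzj, mul_div_assoc,
            div_self (mul_ne_zero hs0.ne' (hαpos j).ne'), mul_one]
        · intro b _ hb; simp [Ne.symm hb]
        · simp
      have hjen := hconv.map_sum_le (t := Finset.univ)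
        (w := fun i => α i * z i / s)
        (p := fun i => (fun j => if j = i then s / α i else 0))
        (fun i _ => div_nonneg (hsnn i) hs0.le)
        (by rw [← Finset.sum_div]; field_simp; rw [← hs]; exact div_self hs0.ne')
        (fun i _ => by
          intro j
          by_cases hji : j = i
          · simp [hji, div_nonneg hs0.le (hαpos i).le]; exact div_nonneg hs0.le (hαpos i).le
          · simp [hji])
      rw [← hxeq] at hjen
      simp only [smul_eq_mul] at hjen
      refine hjen.trans (le_of_eq ?_)
      have heach : ∀ i : Fin n, (α i * z i / s) * f (fun j => if j = i then s / α i else 0)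
          = (α i * z i / s) * s ^ τ := by
        intro i
        rw [hray i, ← hcατ i, ← mul_pow, mul_div_cancel₀ _ (hαpos i).ne']
      have hsne : s ≠ 0 := by rw [hs]; exact hs0.ne'
      rw [Finset.sum_congr rfl fun i _ => heach i, ← Finset.sum_mul, ← Finset.sum_div,
        ← hs, div_self hsne, one_mul]

  -- nonnegativity of fhat
  have hfhnn : 0 ≤ fhat x := by
    rw [hfhat]
    apply Finset.sum_nonneg
    intro d hd
    apply mul_nonneg (mul_nonneg (hc d hd).le _) _
    · exact Finset.prod_nonneg fun i _ => Real.rpow_nonneg (hαpos i).le _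
    · exact Finset.prod_nonneg fun i _ => Real.rpow_nonneg (hx i) _
  -- each pure term is below f x
  have hterm : ∀ i : Fin n, c (fun j => if j = i then τ else 0) * x i ^ τ ≤ f x := by
    intro i
    simp only [hf]
    have : c (fun j => if j = i then τ else 0) * x i ^ τ
        = c (fun j => if j = i then τ else 0) * ∏ j, x j ^ (if j = i then τ else 0) := by
      congr 1
      rw [Finset.prod_eq_single i] <;> simp +contextual
    rw [this]
    exact Finset.single_le_sum (f := fun d => c d * ∏ j, x j ^ d j)
      (fun d hd => mul_nonneg (hc d hd).le
        (Finset.prod_nonneg fun j _ => pow_nonneg (hx j) _)) (hpure i)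
  have hαxle : ∀ i : Fin n, α i * x i ≤ f x ^ ((1:ℝ) / τ) := by
    intro i
    have h1 : (α i * x i) ^ τ ≤ f x := by
      rw [mul_pow, hcατ i]; exact hterm i
    have h2 : ((α i * x i) ^ τ : ℝ) ^ ((1:ℝ)/τ) ≤ f x ^ ((1:ℝ)/τ) :=
      Real.rpow_le_rpow (pow_nonneg (mul_nonneg (hαpos i).le (hx i)) τ) h1 (by positivity)
    rwa [← Real.rpow_natCast (α i * x i) τ, ← Real.rpow_mul (mul_nonneg (hαpos i).le (hx i)),
      mul_one_div, div_self hτ0, Real.rpow_one] at h2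
  -- normalizing constant K
  set β : (Fin n → ℕ) → ℝ := fun d => ∏ i, α i ^ (d i) with hβ
  have hβpos : ∀ d, 0 < β d := fun d => Finset.prod_pos fun i _ => pow_pos (hαpos i) _
  set K : ℝ := ∑ d ∈ D, c d / β d with hK
  have hKpos : 0 < K := by
    apply Finset.sum_pos (fun d hd => div_pos (hc d hd) (hβpos d))
    exact ⟨_, hpure ⟨0, by omega⟩⟩
  have hKle : K ≤ (n : ℝ) ^ τ := by
    have h1 : K = f (fun i => (α i)⁻¹) := by
      rw [hf, hK]
      apply Finset.sum_congr rfl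
      intro d _
      rw [div_eq_mul_inv]
      congr 1
      rw [hβ, ← Finset.prod_inv_distrib]
      exact Finset.prod_congr rfl fun i _ => (inv_pow (α i) (d i)).symm
    have h2 := hkey (fun i => (α i)⁻¹) (fun i => inv_nonneg.mpr (hαpos i).le)
    rw [h1]
    refine h2.trans (le_of_eq ?_)
    congr 1
    rw [Finset.sum_congr rfl fun i _ => mul_inv_cancel₀ (hαpos i).ne']
    simp
  -- key monomial identities
  have hβlam : ∀ d : Fin n → ℕ, (β d) ^ lam = ∏ i, α i ^ (lam * (d i : ℝ)) := by
    intro d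
    show (∏ i, α i ^ (d i)) ^ lam = _
    rw [← Real.finset_prod_rpow _ _ (fun i _ => pow_nonneg (hαpos i).le _) lam]
    apply Finset.prod_congr rfl
    intro i _
    rw [← Real.rpow_natCast (α i) (d i), ← Real.rpow_mul (hαpos i).le, mul_comm]
  have hmlam : ∀ d : Fin n → ℕ, (∏ i, x i ^ (d i)) ^ (1 + lam) = ∏ i, x i ^ ((1 + lam) * (d i : ℝ)) := by
    intro d
    rw [← Real.finset_prod_rpow _ _ (fun i _ => pow_nonneg (hx i) _) (1 + lam)]
    apply Finset.prod_congr rfl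
    intro i _
    rw [← Real.rpow_natCast (x i) (d i), ← Real.rpow_mul (hx i), mul_comm]
  constructor
  · -- lower bound
    by_cases hx0 : ∀ i, x i = 0
    · -- x = 0 : both sides are 0
      have hfx : f x = 0 := by
        rw [hf]
        apply Finset.sum_eq_zero
        intro d hd
        have : ∃ j, d j ≠ 0 := by
          by_contra hcon
          push_neg at hcon
          have := hhom d hd
          simp [hcon] at this
          omega
        obtain ⟨j, hj⟩ := this
        rw [Finset.prod_eq_zero (Finset.mem_univ j) (by rw [hx0 j]; exact zero_pow hj), mul_zero]
      have hfh : fhat x = 0 := by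
        rw [hfhat]
        apply Finset.sum_eq_zero
        intro d hd
        have : ∃ j, d j ≠ 0 := by
          by_contra hcon
          push_neg at hcon
          have := hhom d hd
          simp [hcon] at this
          omega
        obtain ⟨j, hj⟩ := this
        have hz : (∏ i, x i ^ ((1 + lam) * (d i : ℝ))) = 0 := by
          apply Finset.prod_eq_zero (Finset.mem_univ j)
          rw [hx0 j]
          exact Real.zero_rpow (mul_ne_zero (by positivity) (Nat.cast_ne_zero.mpr hj))
        rw [hz, mul_zero]
      rw [hfx, hfh, mul_zero, Real.zero_rpow (by positivity)]
    · push_neg at hx0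
      obtain ⟨i0, hi0⟩ := hx0
      have hxi0 : 0 < x i0 := lt_of_le_of_ne (hx i0) (Ne.symm hi0)
      have hF : 0 < f x :=
        lt_of_lt_of_le (mul_pos (hcpos i0) (pow_pos hxi0 τ)) (hterm i0)
      -- fhat x ≤ f x ^ (1 + lam)
      have hmain : fhat x ≤ f x ^ (1 + lam) := by
        rw [hfhat]
        have hstep : ∀ d ∈ D,
            c d * (∏ i, α i ^ (lam * (d i : ℝ))) * ∏ i, x i ^ ((1 + lam) * (d i : ℝ))
            ≤ f x ^ lam * (c d * ∏ i, x i ^ (d i)) := by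
          intro d hd
          have hfac : ∀ i : Fin n, α i ^ (lam * (d i : ℝ)) * x i ^ ((1 + lam) * (d i : ℝ))
              = (α i * x i) ^ (lam * (d i : ℝ)) * x i ^ (d i : ℕ) := by
            intro i
            rcases eq_or_lt_of_le (hx i) with hxi | hxi
            · rcases Nat.eq_zero_or_pos (d i) with hdi | hdi
              · simp [hdi]
              · rw [← hxi, Real.zero_rpow (mul_ne_zero (by positivity)
                    (Nat.cast_ne_zero.mpr hdi.ne') : (1+lam) * (d i : ℝ) ≠ 0), mul_zero,
                  zero_pow hdi.ne', mul_zero]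
            · rw [Real.mul_rpow (hαpos i).le hxi.le]
              have he : (1 + lam) * (d i : ℝ) = lam * (d i : ℝ) + (d i : ℝ) := by ring
              rw [he, Real.rpow_add hxi, Real.rpow_natCast]
              ring
          rw [mul_assoc, ← Finset.prod_mul_distrib, Finset.prod_congr rfl fun i _ => hfac i,
            Finset.prod_mul_distrib]
          have hprodle : (∏ i, (α i * x i) ^ (lam * (d i : ℝ))) ≤ f x ^ lam := by
            have h1 : (∏ i, (α i * x i) ^ (lam * (d i : ℝ)))
                ≤ ∏ i, (f x ^ (lam / (τ:ℝ))) ^ (d i : ℕ) := by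
              apply Finset.prod_le_prod
              · intro i _
                exact Real.rpow_nonneg (mul_nonneg (hαpos i).le (hx i)) _
              · intro i _
                have := Real.rpow_le_rpow (mul_nonneg (hαpos i).le (hx i)) (hαxle i)
                  (by positivity : (0:ℝ) ≤ lam * (d i : ℝ))
                refine this.trans (le_of_eq ?_)
                rw [← Real.rpow_natCast (f x ^ (lam / (τ:ℝ))) (d i),
                  ← Real.rpow_mul hF.le, ← Real.rpow_mul hF.le]
                congr 1
                ring
            refine h1.trans (le_of_eq ?_)
            rw [Finset.prod_pow_eq_pow_sum, hhom d hd, ← Real.rpow_natCast (f x ^ (lam / (τ:ℝ))) τ,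
              ← Real.rpow_mul hF.le, div_mul_cancel₀ _ hτ0]
          calc c d * ((∏ i, (α i * x i) ^ (lam * (d i : ℝ))) * ∏ i, x i ^ (d i : ℕ))
              ≤ c d * (f x ^ lam * ∏ i, x i ^ (d i : ℕ)) :=
                mul_le_mul_of_nonneg_left (mul_le_mul_of_nonneg_right hprodle
                  (Finset.prod_nonneg fun i _ => pow_nonneg (hx i) _)) (hc d hd).le
            _ = f x ^ lam * (c d * ∏ i, x i ^ (d i : ℕ)) := by ring
        have := Finset.sum_le_sum hstep
        refine le_trans this (le_of_eq ?_)
        have hfx' : (∑ d ∈ D, c d * ∏ i, x i ^ (d i)) = f x := by rw [hf]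
        rw [← Finset.mul_sum, hfx',
          show (1 : ℝ) + lam = lam + 1 by ring, Real.rpow_add hF, Real.rpow_one]
      refine le_trans ?_ hmain
      have h2n : (1:ℝ) ≤ 2 * (n : ℝ) ^ (2 * (τ:ℝ) * lam) := by
        have : (1:ℝ) ≤ (n : ℝ) ^ (2 * (τ:ℝ) * lam) :=
          Real.one_le_rpow (by exact_mod_cast by omega : (1:ℝ) ≤ (n:ℝ)) (by positivity)
        linarith
      calc 1 / (2 * (n : ℝ) ^ (2 * (τ:ℝ) * lam)) * fhat x
          ≤ 1 * fhat x := by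
            apply mul_le_mul_of_nonneg_right _ hfhnn
            rw [div_le_one (by positivity)]
            exact h2n
        _ = fhat x := one_mul _
  · -- upper bound via Jensen for t ↦ t^(1+lam)
    have hjen := (convexOn_rpow (by linarith : (1:ℝ) ≤ 1 + lam)).map_sum_le (t := D)
      (w := fun d => c d / (β d * K))
      (p := fun d => β d * ∏ i, x i ^ (d i))
      (fun d hd => div_nonneg (hc d hd).le (mul_nonneg (hβpos d).le hKpos.le))
      (by
        rw [Finset.sum_congr rfl fun d _ => (div_div (c d) (β d) K).symm, ← Finset.sum_div, ← hK,
          div_self hKpos.ne'])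
      (fun d _ => Set.mem_Ici.mpr
        (mul_nonneg (hβpos d).le (Finset.prod_nonneg fun i _ => pow_nonneg (hx i) _)))
    simp only [smul_eq_mul] at hjen
    have hlhs : (∑ d ∈ D, c d / (β d * K) * (β d * ∏ i, x i ^ (d i))) = f x / K := by
      rw [hf, Finset.sum_div]
      apply Finset.sum_congr rfl
      intro d _
      have hβd : β d ≠ 0 := (hβpos d).ne'
      field_simp
    have hrhs : (∑ d ∈ D, c d / (β d * K) * (β d * ∏ i, x i ^ (d i)) ^ (1 + lam))
        = fhat x / K := by
      rw [hfhat, Finset.sum_div]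
      apply Finset.sum_congr rfl
      intro d hd
      have hβ1 : β d ^ (1 + lam) = β d * β d ^ lam := by
        rw [show (1 : ℝ) + lam = lam + 1 by ring, Real.rpow_add (hβpos d), Real.rpow_one,
          mul_comm]
      rw [Real.mul_rpow (hβpos d).le (Finset.prod_nonneg fun i _ => pow_nonneg (hx i) _),
        hmlam d, hβ1, hβlam d]
      have hβd : β d ≠ 0 := (hβpos d).ne'
      field_simp
    rw [hlhs, hrhs] at hjen
    have h3 : f x ^ (1 + lam) ≤ fhat x * K ^ lam := by
      calc f x ^ (1 + lam) = (f x / K) ^ (1 + lam) * K ^ (1 + lam) := by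
            rw [Real.div_rpow (hfnn x hx) hKpos.le,
              div_mul_cancel₀ _ (Real.rpow_pos_of_pos hKpos _).ne']
        _ ≤ (fhat x / K) * K ^ (1 + lam) :=
            mul_le_mul_of_nonneg_right hjen (Real.rpow_nonneg hKpos.le _)
        _ = fhat x * K ^ lam := by
            rw [show (1 : ℝ) + lam = lam + 1 by ring, Real.rpow_add hKpos, Real.rpow_one]
            field_simp
    have h4 : K ^ lam ≤ (n : ℝ) ^ (lam * (τ : ℝ)) := by
      refine (Real.rpow_le_rpow hKpos.le hKle hlam0.le).trans (le_of_eq ?_)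
      rw [← Real.rpow_natCast (n : ℝ) τ, ← Real.rpow_mul (Nat.cast_nonneg n), mul_comm]
    calc f x ^ (1 + lam) ≤ fhat x * K ^ lam := h3
      _ ≤ fhat x * (n : ℝ) ^ (lam * (τ : ℝ)) := mul_le_mul_of_nonneg_left h4 hfhnn
      _ = (n : ℝ) ^ (lam * (τ : ℝ)) * fhat x := mul_comm _ _
end

section
/- Coefficient-sum bound for normalized convex homogeneous polynomials: Let g(x) = ∑_{d ∈ D} b_d · ∏_i x_i^{d_i} be a real polynomial in n variables, homogeneous of degree τ ≥ 1, with all coefficients b_d ≥ 0, whose evaluation is convex on ℝ^n_+, and such that for every i ∈ {1, …, n} the coefficient of the monomial x_i^τ equals 1. Then the sum of all coefficients satisfies ∑_{d ∈ D} b_d ≤ n^τ. -/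
/-- **Coefficient-sum bound for normalized convex homogeneous polynomials.**
If `g` is a real polynomial in `n` variables, homogeneous of degree `τ ≥ 1`,
with nonnegative coefficients, convex evaluation on the nonnegative orthant,
and with the coefficient of each pure power `x_i^τ` equal to `1`, then the sum
of all its coefficients is at most `n^τ`. -/
theorem stmt_10 {n : ℕ} (τ : ℕ) (hτ : 1 ≤ τ) (g : MvPolynomial (Fin n) ℝ)
    (hhom : g.IsHomogeneous τ)
    (hcoeff : ∀ d : Fin n →₀ ℕ, 0 ≤ g.coeff d)
    (hconv : ConvexOn ℝ {x : Fin n → ℝ | ∀ i, 0 ≤ x i}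
      (fun x => MvPolynomial.eval x g))
    (hpure : ∀ i : Fin n, g.coeff (Finsupp.single i τ) = 1) :
    ∑ d ∈ g.support, g.coeff d ≤ (n : ℝ) ^ τ := by
  rcases Nat.eq_zero_or_pos n with hn | hn
  · subst hn
    have hs : g.support = ∅ := by
      ext d
      simp only [MvPolynomial.mem_support_iff, Finset.notMem_empty, iff_false, not_not]
      apply hhom.coeff_eq_zero
      have : d = 0 := Subsingleton.elim _ _
      simp [this]
      omega
    rw [hs]
    simp
  -- main case: n ≥ 1
  · set q : Fin n → Fin n → ℝ := fun i j => if j = i then (n : ℝ) else 0 with hq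
    have heval : ∀ i, MvPolynomial.eval (q i) g = (n : ℝ) ^ τ := by
      intro i
      rw [MvPolynomial.eval_eq]
      rw [Finset.sum_eq_single (Finsupp.single i τ)]
      · rw [hpure i, one_mul]
        have hsupp : (Finsupp.single i τ).support = {i} := Finsupp.support_single_ne_zero i (by omega)
        rw [hsupp]
        simp [hq]
      · intro d hd hne
        -- d has some j ≠ i in its support
        have hsub : ¬ d.support ⊆ {i} := by
          intro hsub
          have hsing := Finsupp.support_subset_singleton.mp hsub
          have hw := hhom (MvPolynomial.mem_support_iff.mp hd)
          have hdi : d i = τ := by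
            rw [hsing] at hw
            simpa [Finsupp.weight_apply, Finsupp.sum_single_index] using hw
          exact hne (by rw [hsing, hdi])
        rw [Finset.not_subset] at hsub
        obtain ⟨j, hj, hji⟩ := hsub
        have : (∏ k ∈ d.support, q i k ^ d k) = 0 := by
          apply Finset.prod_eq_zero hj
          have hdj : d j ≠ 0 := Finsupp.mem_support_iff.mp hj
          simp only [hq]
          rw [if_neg (by simpa using hji)]
          exact zero_pow hdj
        rw [this, mul_zero]
      · intro h
        rw [MvPolynomial.notMem_support_iff.mp h, zero_mul]
    -- Jensen: 1 = ∑ (1/n) • q i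
    have hmem : ∀ i ∈ Finset.univ (α := Fin n), q i ∈ {x : Fin n → ℝ | ∀ i, 0 ≤ x i} := by
      intro i _ j
      simp only [hq]
      split <;> positivity
    have hw : ∑ _i : Fin n, (1 / (n : ℝ)) = 1 := by
      rw [Finset.sum_const]
      simp
      field_simp
    have hcomb : (∑ i : Fin n, (1 / (n : ℝ)) • q i) = fun _ => (1 : ℝ) := by
      funext j
      simp only [Finset.sum_apply, Pi.smul_apply, smul_eq_mul, hq]
      rw [Finset.sum_eq_single j]
      · rw [if_pos rfl]
        field_simp
      · intro i _ hij
        rw [if_neg (Ne.symm hij), mul_zero]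
      · simp
    have hjen := hconv.map_sum_le (t := Finset.univ) (w := fun _ => 1 / (n : ℝ))
      (p := q) (fun i _ => by positivity) hw hmem
    rw [hcomb] at hjen
    have hsum : ∑ d ∈ g.support, g.coeff d = MvPolynomial.eval (fun _ => (1 : ℝ)) g := by
      rw [MvPolynomial.eval_eq]
      apply Finset.sum_congr rfl
      intro d _
      simp
    rw [hsum]
    calc MvPolynomial.eval (fun _ => (1:ℝ)) g
        ≤ ∑ i : Fin n, (1 / (n : ℝ)) • MvPolynomial.eval (q i) g := hjen
      _ = (n : ℝ) ^ τ := by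
          simp only [heval, smul_eq_mul, Finset.sum_const, Finset.card_univ, Fintype.card_fin,
            nsmul_eq_mul]
          field_simp
end

section
/- Gradient domination of the term-wise powered surrogate: Let f(x) = ∑_{d ∈ D} c_d · ∏_i x_i^{d_i} be a polynomial in n variables with all c_d ≥ 0 (D a finite set of exponent vectors in ℕ^n) and let 0 < λ ≤ 1. Define f̃(x) := ∑_{d ∈ D} c_d^{1+λ} · (∏_i x_i^{d_i})^{1+λ} and g := f^{1+λ}. Then for every x in the open positive orthant and every i ∈ {1, …, n}: ∂f̃/∂x_i (x) ≤ ∂g/∂x_i (x); that is, ∑_{d: d_i ≥ 1} c_d^{1+λ} (1+λ) d_i · ∏_j x_j^{(1+λ)d_j} / x_i ≤ (1+λ) f(x)^λ · ∂f/∂x_i(x). -/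
/-- **Gradient domination of the term-wise powered surrogate.**
Let `f(x) = ∑_{d ∈ D} c_d ∏_j x_j^{d_j}` with all `c_d ≥ 0`, let `0 < λ ≤ 1`,
and set `f̃(x) := ∑_{d ∈ D} c_d^{1+λ} (∏_j x_j^{d_j})^{1+λ}` and
`g := f^{1+λ}`. Then at every point `x` of the open positive orthant and every
coordinate `i`, `∂f̃/∂x_i (x) ≤ ∂g/∂x_i (x)`; that is,
`∑_{d : d_i ≥ 1} c_d^{1+λ} (1+λ) d_i ∏_j x_j^{(1+λ)d_j} / x_i
  ≤ (1+λ) f(x)^λ · ∂f/∂x_i(x)`. -/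
theorem stmt_12 {n : ℕ} (D : Finset (Fin n → ℕ)) (c : (Fin n → ℕ) → ℝ)
    (hc : ∀ d ∈ D, 0 ≤ c d)
    (lam : ℝ) (hlam0 : 0 < lam) (hlam1 : lam ≤ 1)
    (f ftilde g : (Fin n → ℝ) → ℝ)
    (hf : f = fun x => ∑ d ∈ D, c d * ∏ j, x j ^ (d j))
    (hft : ftilde = fun x => ∑ d ∈ D, c d ^ (1 + lam) * (∏ j, x j ^ (d j)) ^ (1 + lam))
    (hg : g = fun x => f x ^ (1 + lam))
    (x : Fin n → ℝ) (hx : ∀ j, 0 < x j) (i : Fin n) :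
    fderiv ℝ ftilde x (Pi.single i 1) ≤ fderiv ℝ g x (Pi.single i 1) ∧
      ∑ d ∈ D.filter (fun d => 1 ≤ d i),
          c d ^ (1 + lam) * (1 + lam) * (d i : ℝ) *
            (∏ j, x j ^ ((1 + lam) * (d j : ℝ))) / x i ≤
        (1 + lam) * f x ^ lam * fderiv ℝ f x (Pi.single i 1) := by
  subst hf hft hg
  classical
  have h1lam : (1:ℝ) ≤ 1 + lam := by linarith
  have hPpos : ∀ d : Fin n → ℕ, (0:ℝ) < ∏ j, x j ^ (d j) :=
    fun d => Finset.prod_pos fun j _ => pow_pos (hx j) _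
  -- derivative of each monomial
  have hM : ∀ d : Fin n → ℕ, HasFDerivAt (fun y : Fin n → ℝ => ∏ j, (y j) ^ (d j))
      (∑ j, (∏ k ∈ Finset.univ.erase j, x k ^ d k) •
        (((d j : ℝ) * x j ^ (d j - 1)) • (ContinuousLinearMap.proj j : (Fin n → ℝ) →L[ℝ] ℝ))) x := by
    intro d
    exact HasFDerivAt.finset_prod fun j _ =>
      (hasDerivAt_pow (d j) (x j)).comp_hasFDerivAt x (hasFDerivAt_apply j x)
  set M : (Fin n → ℕ) → ((Fin n → ℝ) →L[ℝ] ℝ) := fun d =>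
    ∑ j, (∏ k ∈ Finset.univ.erase j, x k ^ d k) •
        (((d j : ℝ) * x j ^ (d j - 1)) • (ContinuousLinearMap.proj j : (Fin n → ℝ) →L[ℝ] ℝ)) with hMdef
  -- value of M d on Pi.single i 1
  have hMv : ∀ d : Fin n → ℕ, M d (Pi.single i 1)
      = (d i : ℝ) * (∏ j, x j ^ (d j)) / x i := by
    intro d
    have e1 : M d (Pi.single i 1) = ∑ j, (∏ k ∈ Finset.univ.erase j, x k ^ d k) *
        ((d j : ℝ) * x j ^ (d j - 1) * (Pi.single i 1 : Fin n → ℝ) j) := by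
      simp [hMdef, mul_assoc]
    rw [e1, Finset.sum_eq_single i]
    · rcases Nat.eq_zero_or_pos (d i) with h0 | h0
      · simp [h0]
      · have hPi : (∏ j, x j ^ (d j)) = x i ^ (d i) * ∏ k ∈ Finset.univ.erase i, x k ^ d k :=
          (Finset.mul_prod_erase Finset.univ _ (Finset.mem_univ i)).symm
        have hxi := (hx i).ne'
        have hpow : x i ^ (d i) = x i ^ (d i - 1) * x i := by
          rw [← pow_succ, Nat.sub_add_cancel h0]
        rw [hPi, hpow, Pi.single_eq_same]
        field_simp
    · intro j _ hji
      simp [Pi.single_eq_of_ne hji]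
    · intro h; exact absurd (Finset.mem_univ i) h
  -- derivative of f
  have hF : HasFDerivAt (fun y : Fin n → ℝ => ∑ d ∈ D, c d * ∏ j, (y j) ^ (d j))
      (∑ d ∈ D, c d • M d) x :=
    HasFDerivAt.fun_sum fun d _ => (hM d).const_mul (c d)
  -- derivative of g
  have hG : HasFDerivAt (fun y : Fin n → ℝ => (∑ d ∈ D, c d * ∏ j, (y j) ^ (d j)) ^ (1 + lam))
      (((1 + lam) * (∑ d ∈ D, c d * ∏ j, x j ^ (d j)) ^ lam) • (∑ d ∈ D, c d • M d)) x := by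
    have h := hF.rpow_const (p := 1 + lam) (Or.inr h1lam)
    have e : (1:ℝ) + lam - 1 = lam := by ring
    rw [e] at h
    exact h
  -- derivative of ftilde
  have hT : HasFDerivAt
      (fun y : Fin n → ℝ => ∑ d ∈ D, c d ^ (1 + lam) * (∏ j, (y j) ^ (d j)) ^ (1 + lam))
      (∑ d ∈ D, (c d ^ (1 + lam) * ((1 + lam) * (∏ j, x j ^ (d j)) ^ lam)) • M d) x := by
    refine HasFDerivAt.fun_sum fun d _ => ?_
    have h := ((hM d).rpow_const (p := 1 + lam) (Or.inr h1lam)).const_mul (c d ^ (1 + lam))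
    have e : (1:ℝ) + lam - 1 = lam := by ring
    rw [e] at h
    rwa [smul_smul] at h
  -- evaluate the three fderivs
  have eF : fderiv ℝ (fun y : Fin n → ℝ => ∑ d ∈ D, c d * ∏ j, (y j) ^ (d j)) x (Pi.single i 1)
      = ∑ d ∈ D, c d * ((d i : ℝ) * (∏ j, x j ^ (d j)) / x i) := by
    rw [hF.fderiv]
    simp only [ContinuousLinearMap.coe_sum', Finset.sum_apply,
      ContinuousLinearMap.coe_smul', Pi.smul_apply, smul_eq_mul]
    exact Finset.sum_congr rfl fun d _ => by rw [hMv d]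
  have eG : fderiv ℝ (fun y : Fin n → ℝ => (∑ d ∈ D, c d * ∏ j, (y j) ^ (d j)) ^ (1 + lam)) x
        (Pi.single i 1)
      = ∑ d ∈ D, ((1 + lam) * (∑ e ∈ D, c e * ∏ j, x j ^ (e j)) ^ lam) *
          (c d * ((d i : ℝ) * (∏ j, x j ^ (d j)) / x i)) := by
    rw [hG.fderiv]
    simp only [ContinuousLinearMap.coe_smul', Pi.smul_apply, smul_eq_mul,
      ContinuousLinearMap.coe_sum', Finset.sum_apply]
    rw [Finset.mul_sum]
    exact Finset.sum_congr rfl fun d _ => by rw [hMv d]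
  have eT : fderiv ℝ
        (fun y : Fin n → ℝ => ∑ d ∈ D, c d ^ (1 + lam) * (∏ j, (y j) ^ (d j)) ^ (1 + lam)) x
        (Pi.single i 1)
      = ∑ d ∈ D, (c d ^ (1 + lam) * ((1 + lam) * (∏ j, x j ^ (d j)) ^ lam)) *
          ((d i : ℝ) * (∏ j, x j ^ (d j)) / x i) := by
    rw [hT.fderiv]
    simp only [ContinuousLinearMap.coe_sum', Finset.sum_apply,
      ContinuousLinearMap.coe_smul', Pi.smul_apply, smul_eq_mul]
    exact Finset.sum_congr rfl fun d _ => by rw [hMv d]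
  -- the key termwise inequality
  have key : ∀ d ∈ D,
      (c d ^ (1 + lam) * ((1 + lam) * (∏ j, x j ^ (d j)) ^ lam)) *
          ((d i : ℝ) * (∏ j, x j ^ (d j)) / x i)
        ≤ ((1 + lam) * (∑ e ∈ D, c e * ∏ j, x j ^ (e j)) ^ lam) *
          (c d * ((d i : ℝ) * (∏ j, x j ^ (d j)) / x i)) := by
    intro d hd
    have hA : (0:ℝ) ≤ (d i : ℝ) * (∏ j, x j ^ (d j)) / x i :=
      div_nonneg (mul_nonneg (Nat.cast_nonneg _) (hPpos d).le) (hx i).le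
    have hcP : c d * (∏ j, x j ^ (d j)) ≤ ∑ e ∈ D, c e * ∏ j, x j ^ (e j) :=
      Finset.single_le_sum (fun e he => mul_nonneg (hc e he) (hPpos e).le) hd
    have h1 : c d ^ (1 + lam) * (∏ j, x j ^ (d j)) ^ lam
        = c d * ((c d * ∏ j, x j ^ (d j)) ^ lam) := by
      rw [Real.mul_rpow (hc d hd) (hPpos d).le,
        Real.rpow_add' (hc d hd) (by positivity : (1:ℝ) + lam ≠ 0), Real.rpow_one]
      ring
    have h2 : (c d * ∏ j, x j ^ (d j)) ^ lam ≤ (∑ e ∈ D, c e * ∏ j, x j ^ (e j)) ^ lam :=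
      Real.rpow_le_rpow (mul_nonneg (hc d hd) (hPpos d).le) hcP hlam0.le
    have h3 : c d * (c d * ∏ j, x j ^ (d j)) ^ lam
        ≤ c d * (∑ e ∈ D, c e * ∏ j, x j ^ (e j)) ^ lam :=
      mul_le_mul_of_nonneg_left h2 (hc d hd)
    have e1 : (c d ^ (1 + lam) * ((1 + lam) * (∏ j, x j ^ (d j)) ^ lam)) *
          ((d i : ℝ) * (∏ j, x j ^ (d j)) / x i)
        = ((1 + lam) * ((d i : ℝ) * (∏ j, x j ^ (d j)) / x i)) *
          (c d * ((c d * ∏ j, x j ^ (d j)) ^ lam)) := by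
      rw [← h1]; ring
    have e2 : ((1 + lam) * (∑ e ∈ D, c e * ∏ j, x j ^ (e j)) ^ lam) *
          (c d * ((d i : ℝ) * (∏ j, x j ^ (d j)) / x i))
        = ((1 + lam) * ((d i : ℝ) * (∏ j, x j ^ (d j)) / x i)) *
          (c d * (∑ e ∈ D, c e * ∏ j, x j ^ (e j)) ^ lam) := by ring
    rw [e1, e2]
    exact mul_le_mul_of_nonneg_left h3 (mul_nonneg (by linarith) hA)
  constructor
  · rw [eT, eG]
    exact Finset.sum_le_sum key
  · beta_reduce
    rw [eF, Finset.mul_sum]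
    calc ∑ d ∈ D.filter (fun d => 1 ≤ d i),
            c d ^ (1 + lam) * (1 + lam) * (d i : ℝ) *
              (∏ j, x j ^ ((1 + lam) * (d j : ℝ))) / x i
        = ∑ d ∈ D, c d ^ (1 + lam) * (1 + lam) * (d i : ℝ) *
              (∏ j, x j ^ ((1 + lam) * (d j : ℝ))) / x i := by
          apply Finset.sum_filter_of_ne
          intro d _ hne
          by_contra hlt
          have h0 : d i = 0 := by omega
          simp [h0] at hne
      _ = ∑ d ∈ D, (c d ^ (1 + lam) * ((1 + lam) * (∏ j, x j ^ (d j)) ^ lam)) *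
              ((d i : ℝ) * (∏ j, x j ^ (d j)) / x i) := by
          refine Finset.sum_congr rfl fun d _ => ?_
          have hprod : (∏ j, x j ^ ((1 + lam) * (d j : ℝ)))
              = (∏ j, x j ^ (d j)) ^ (1 + lam) := by
            rw [← Real.finset_prod_rpow _ _ (fun j _ => (pow_pos (hx j) _).le)]
            refine Finset.prod_congr rfl fun j _ => ?_
            rw [← Real.rpow_natCast (x j) (d j), ← Real.rpow_mul (hx j).le]
            ring_nf
          rw [hprod, Real.rpow_add (hPpos d) 1 lam, Real.rpow_one]
          ring
      _ ≤ _ := Finset.sum_le_sum key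
end

section
/- Gradient scaling implies value scaling: Let λ > 1 and let g : ℝ^n → ℝ be differentiable on the nonnegative orthant with g(0) = 0, and suppose that for all ρ ≥ 1 and all z ∈ ℝ^n_+ one has ∇g(ρ·z) ≥ ρ^{λ−1} · ∇g(z) coordinatewise. Then for all ρ ≥ 1 and all z ∈ ℝ^n_+, g(ρ·z) ≥ ρ^λ · g(z). -/
/-- Apply a continuous linear functional on `Fin n → ℝ` via basis expansion. -/
lemma clm_apply_eq_sum {n : ℕ} (L : (Fin n → ℝ) →L[ℝ] ℝ) (z : Fin n → ℝ) :
    L z = ∑ i, z i * L (Pi.single i 1) := by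
  have h := L.toLinearMap.pi_apply_eq_sum_univ z
  simp only [ContinuousLinearMap.coe_coe, smul_eq_mul] at h
  rw [h]
  refine Finset.sum_congr rfl fun i _ => ?_
  congr 1
  congr 1
  ext j
  simp [Pi.single_apply, eq_comm]

/-- **Gradient scaling implies value scaling.**
Let `λ > 1` and let `g` be differentiable on the nonnegative orthant with
`g(0) = 0`, such that `∇g(ρz) ≥ ρ^{λ−1} ∇g(z)` coordinatewise for all `ρ ≥ 1`
and `z ≥ 0`. Then `g(ρz) ≥ ρ^λ g(z)` for all `ρ ≥ 1` and `z ≥ 0`. -/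
theorem stmt_15 {n : ℕ} (lam : ℝ) (hlam : 1 < lam) (g : (Fin n → ℝ) → ℝ)
    (hdiff : ∀ z : Fin n → ℝ, (∀ i, 0 ≤ z i) → DifferentiableAt ℝ g z)
    (hg0 : g 0 = 0)
    (hgrad : ∀ ρ : ℝ, 1 ≤ ρ → ∀ z : Fin n → ℝ, (∀ i, 0 ≤ z i) → ∀ i,
      ρ ^ (lam - 1) * fderiv ℝ g z (Pi.single i 1) ≤
        fderiv ℝ g (ρ • z) (Pi.single i 1)) :
    ∀ ρ : ℝ, 1 ≤ ρ → ∀ z : Fin n → ℝ, (∀ i, 0 ≤ z i) →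
      ρ ^ lam * g z ≤ g (ρ • z) := by
  intro ρ hρ z hz
  have hρ0 : (0:ℝ) < ρ := lt_of_lt_of_le one_pos hρ
  -- key directional gradient inequality
  have key : ∀ w : Fin n → ℝ, (∀ i, 0 ≤ w i) →
      ρ ^ (lam - 1) * fderiv ℝ g w z ≤ fderiv ℝ g (ρ • w) z := by
    intro w hw
    rw [clm_apply_eq_sum (fderiv ℝ g w) z, clm_apply_eq_sum (fderiv ℝ g (ρ • w)) z,
      Finset.mul_sum]
    refine Finset.sum_le_sum fun i _ => ?_
    have := hgrad ρ hρ w hw i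
    calc ρ ^ (lam - 1) * (z i * fderiv ℝ g w (Pi.single i 1))
        = z i * (ρ ^ (lam - 1) * fderiv ℝ g w (Pi.single i 1)) := by ring
      _ ≤ z i * fderiv ℝ g (ρ • w) (Pi.single i 1) :=
          mul_le_mul_of_nonneg_left this (hz i)
  -- the auxiliary function
  set φ : ℝ → ℝ := fun t => g ((ρ * t) • z) - ρ ^ lam * g (t • z) with hφ
  have hder : ∀ t : ℝ, 0 ≤ t → HasDerivAt φ
      (ρ * fderiv ℝ g ((ρ * t) • z) z - ρ ^ lam * fderiv ℝ g (t • z) z) t := by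
    intro t ht
    have hzt : ∀ i, 0 ≤ (t • z) i := fun i => mul_nonneg ht (hz i)
    have hzρt : ∀ i, 0 ≤ ((ρ * t) • z) i :=
      fun i => mul_nonneg (mul_nonneg hρ0.le ht) (hz i)
    have h1 : HasDerivAt (fun s : ℝ => (ρ * s) • z) (ρ • z) t := by
      simpa using ((hasDerivAt_id t).const_mul ρ).smul_const z
    have h2 : HasDerivAt (fun s : ℝ => s • z) z t := by
      simpa using (hasDerivAt_id t).smul_const z
    have H1 : HasDerivAt (fun s : ℝ => g ((ρ * s) • z))
        (ρ * fderiv ℝ g ((ρ * t) • z) z) t := by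
      have := ((hdiff _ hzρt).hasFDerivAt).comp_hasDerivAt t h1
      rw [map_smul, smul_eq_mul] at this
      exact this
    have H2 : HasDerivAt (fun s : ℝ => g (s • z)) (fderiv ℝ g (t • z) z) t :=
      ((hdiff _ hzt).hasFDerivAt).comp_hasDerivAt t h2
    exact H1.sub (H2.const_mul _)
  have hmono : MonotoneOn φ (Set.Icc (0:ℝ) 1) := by
    apply monotoneOn_of_deriv_nonneg (convex_Icc 0 1)
    · intro t ht
      exact (hder t ht.1).continuousAt.continuousWithinAt
    · intro t ht
      rw [interior_Icc] at ht
      exact ((hder t ht.1.le).differentiableAt).differentiableWithinAt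
    · intro t ht
      rw [interior_Icc] at ht
      rw [(hder t ht.1.le).deriv]
      have hzt : ∀ i, 0 ≤ (t • z) i := fun i => mul_nonneg ht.1.le (hz i)
      have hk := key (t • z) hzt
      have hsm : (ρ * t) • z = ρ • (t • z) := by rw [smul_smul]
      have hrw : ρ ^ lam = ρ * ρ ^ (lam - 1) := by
        nth_rewrite 1 [show lam = 1 + (lam - 1) by ring]
        rw [Real.rpow_add hρ0, Real.rpow_one]
      rw [hsm, hrw, sub_nonneg, mul_assoc]
      exact mul_le_mul_of_nonneg_left hk hρ0.le
  have h01 := hmono (Set.left_mem_Icc.2 zero_le_one) (Set.right_mem_Icc.2 zero_le_one)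
      zero_le_one
  simp only [hφ, mul_zero, zero_smul, mul_one, hg0, one_smul, sub_zero, mul_zero, sub_zero] at h01
  linarith [h01]
end

section
/- Dual variable bound under monotone gradient (trajectory form): Let f : ℝ^n → ℝ be differentiable on the nonnegative orthant with ∇f(w) ≥ 0 for all w ∈ ℝ^n_+ and with monotone gradient (0 ≤ u ≤ v implies ∇f(u) ≤ ∇f(v) coordinatewise). Let ρ > 0, T > 0, and let x, z : [0, T] → ℝ^n be differentiable with: every coordinate of x(t) positive and nondecreasing in t; z(0) = 0; z_i'(t) ≥ 0 for all i, t; and the coupling ρ · x_i(t) · z_i'(t) = ∇_i f(x(t)) · x_i'(t) for all i ∈ {1, …, n} and t ∈ [0, T]. Then for every i: z_i(T) ≤ (1/ρ) · ln( x_i(T) / x_i(0) ) · ∇_i f(x(T)). -/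
/-- **Dual variable bound under monotone gradient (trajectory form).**
Let `f` be differentiable on the nonnegative orthant with nonnegative and
monotone gradient. Let `ρ > 0`, `T > 0`, and let trajectories
`x, z : [0, T] → ℝ^n` be differentiable with: every coordinate of `x`
positive and nondecreasing, `z 0 = 0`, `z' ≥ 0`, and the coupling
`ρ · x_i(t) · z_i'(t) = ∇_i f(x(t)) · x_i'(t)`. Then for every `i`:
`z_i(T) ≤ (1/ρ) · ln(x_i(T)/x_i(0)) · ∇_i f(x(T))`. -/
theorem stmt_17 {n : ℕ} (f : (Fin n → ℝ) → ℝ)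
    (hdiff : ∀ w : Fin n → ℝ, (∀ i, 0 ≤ w i) → DifferentiableAt ℝ f w)
    (hgradnn : ∀ w : Fin n → ℝ, (∀ i, 0 ≤ w i) → ∀ i,
      0 ≤ fderiv ℝ f w (Pi.single i 1))
    (hgradmono : ∀ u v : Fin n → ℝ, (∀ i, 0 ≤ u i) → (∀ i, u i ≤ v i) → ∀ i,
      fderiv ℝ f u (Pi.single i 1) ≤ fderiv ℝ f v (Pi.single i 1))
    (ρ T : ℝ) (hρ : 0 < ρ) (hT : 0 < T)
    (x z x' z' : ℝ → Fin n → ℝ)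
    (hx : ∀ i, ∀ t ∈ Set.Icc (0 : ℝ) T, HasDerivAt (fun s => x s i) (x' t i) t)
    (hz : ∀ i, ∀ t ∈ Set.Icc (0 : ℝ) T, HasDerivAt (fun s => z s i) (z' t i) t)
    (hxpos : ∀ i, ∀ t ∈ Set.Icc (0 : ℝ) T, 0 < x t i)
    (hxmono : ∀ i, MonotoneOn (fun t => x t i) (Set.Icc (0 : ℝ) T))
    (hz0 : z 0 = 0)
    (hz' : ∀ i, ∀ t ∈ Set.Icc (0 : ℝ) T, 0 ≤ z' t i)
    (hcouple : ∀ i, ∀ t ∈ Set.Icc (0 : ℝ) T,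
      ρ * x t i * z' t i = fderiv ℝ f (x t) (Pi.single i 1) * x' t i)
    (i : Fin n) :
    z T i ≤ (1 / ρ) * Real.log (x T i / x 0 i) *
      fderiv ℝ f (x T) (Pi.single i 1) := by

  have hTmem : T ∈ Set.Icc (0:ℝ) T := ⟨hT.le, le_refl T⟩
  have h0mem : (0:ℝ) ∈ Set.Icc (0:ℝ) T := ⟨le_refl 0, hT.le⟩
  set C : ℝ := fderiv ℝ f (x T) (Pi.single i 1) with hC
  -- x' nonneg on [0,T]
  have hx'nn : ∀ t ∈ Set.Icc (0:ℝ) T, 0 ≤ x' t i := by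
    intro t ht
    rcases lt_or_eq_of_le ht.2 with hlt | heq
    · have h1 : Filter.Tendsto (slope (fun s => x s i) t) (nhdsWithin t (Set.Ioi t))
          (nhds (x' t i)) :=
        (hasDerivAt_iff_tendsto_slope.mp (hx i t ht)).mono_left
          (nhdsWithin_mono t (fun s hs => ne_of_gt hs))
      refine ge_of_tendsto h1 ?_
      filter_upwards [Ioo_mem_nhdsGT_of_mem ⟨le_refl t, hlt⟩] with s hs
      rw [slope_def_field]
      have hsmem : s ∈ Set.Icc (0:ℝ) T := ⟨le_trans ht.1 hs.1.le, hs.2.le⟩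
      have hmon := hxmono i ht hsmem hs.1.le
      exact div_nonneg (sub_nonneg.mpr hmon) (sub_nonneg.mpr hs.1.le)
    · subst heq
      have h1 : Filter.Tendsto (slope (fun s => x s i) t) (nhdsWithin t (Set.Iio t))
          (nhds (x' t i)) :=
        (hasDerivAt_iff_tendsto_slope.mp (hx i t ht)).mono_left
          (nhdsWithin_mono t (fun s hs => ne_of_lt hs))
      refine ge_of_tendsto h1 ?_
      filter_upwards [Ioo_mem_nhdsLT_of_mem ⟨hT, le_refl t⟩] with s hs
      rw [slope_def_field]
      have hsmem : s ∈ Set.Icc (0:ℝ) t := ⟨hs.1.le, hs.2.le⟩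
      have hmon := hxmono i hsmem ht hs.2.le
      have h1 : x s i - x t i ≤ 0 := sub_nonpos.mpr hmon
      have h2 : s - t < 0 := sub_neg.mpr hs.2
      have h3 := div_nonneg (neg_nonneg.mpr h1) (neg_nonneg.mpr h2.le)
      rwa [neg_div_neg_eq] at h3
  -- derivative of g
  have hg : ∀ t ∈ Set.Icc (0:ℝ) T,
      HasDerivAt (fun s => (1/ρ) * C * Real.log (x s i) - z s i)
        ((1/ρ) * C * (x' t i / x t i) - z' t i) t := by
    intro t ht
    exact (((hx i t ht).log (ne_of_gt (hxpos i t ht))).const_mul ((1/ρ)*C)).sub (hz i t ht)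
  -- derivative nonneg via coupling and monotone gradient
  have hg' : ∀ t ∈ Set.Icc (0:ℝ) T, 0 ≤ (1/ρ) * C * (x' t i / x t i) - z' t i := by
    intro t ht
    have hxt : 0 < x t i := hxpos i t ht
    have hle : ∀ j, x t j ≤ x T j := fun j => hxmono j ht hTmem ht.2
    have hnn : ∀ j, 0 ≤ x t j := fun j => (hxpos j t ht).le
    have hD : fderiv ℝ f (x t) (Pi.single i 1) ≤ C := hgradmono (x t) (x T) hnn hle i
    have hcp := hcouple i t ht
    have hmul : ρ * x t i * z' t i ≤ C * x' t i := by
      rw [hcp]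
      exact mul_le_mul_of_nonneg_right hD (hx'nn t ht)
    have hpos : 0 < ρ * x t i := mul_pos hρ hxt
    rw [sub_nonneg]
    have key : z' t i * (ρ * x t i) ≤ (1 / ρ * C * (x' t i / x t i)) * (ρ * x t i) := by
      calc z' t i * (ρ * x t i) = ρ * x t i * z' t i := by ring
        _ ≤ C * x' t i := hmul
        _ = _ := by field_simp
    exact le_of_mul_le_mul_right key hpos
  -- monotonicity of g
  have hmonog : MonotoneOn (fun s => (1/ρ) * C * Real.log (x s i) - z s i)
      (Set.Icc (0:ℝ) T) := by
    apply monotoneOn_of_deriv_nonneg (convex_Icc 0 T)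
    · intro t ht
      exact (hg t ht).continuousAt.continuousWithinAt
    · intro t ht
      rw [interior_Icc] at ht
      exact (hg t ⟨ht.1.le, ht.2.le⟩).differentiableAt.differentiableWithinAt
    · intro t ht
      rw [interior_Icc] at ht
      have ht' : t ∈ Set.Icc (0:ℝ) T := ⟨ht.1.le, ht.2.le⟩
      rw [(hg t ht').deriv]
      exact hg' t ht'
  have hfin := hmonog h0mem hTmem hT.le
  simp only [hz0, Pi.zero_apply, sub_zero] at hfin
  have hlog : Real.log (x T i / x 0 i) = Real.log (x T i) - Real.log (x 0 i) :=
    Real.log_div (ne_of_gt (hxpos i T hTmem)) (ne_of_gt (hxpos i 0 h0mem))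
  rw [hlog]
  nlinarith [hfin]
end

section
/- Dual variable bound under λ-monotone gradient (trajectory form): Let λ > 0 and let f : ℝ^n → ℝ be differentiable on the nonnegative orthant with ∇f(w) ≥ 0 for all w ∈ ℝ^n_+, and suppose ∇f is λ-monotone: for each i ∈ {1, …, n} and all u ≤ v in ℝ^n_+ with u_i > 0 and v_i > 0, ∇_i f(u)/u_i^λ ≤ ∇_i f(v)/v_i^λ. Let ρ > 0, T > 0, and let x, z : [0, T] → ℝ^n be differentiable with: every coordinate of x(t) positive and nondecreasing in t; z(0) = 0; z_i'(t) ≥ 0 for all i, t; and the coupling ρ · x_i(t) · z_i'(t) = ∇_i f(x(t)) · x_i'(t) for all i and t. Then for every i: z_i(T) ≤ ∇_i f(x(T)) / (λ·ρ). -/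
open Set

lemma aux_deriv_nonneg_of_monotoneOn {g : ℝ → ℝ} {g' t T : ℝ} (hT : 0 < T)
    (ht : t ∈ Icc (0:ℝ) T) (hm : MonotoneOn g (Icc (0:ℝ) T))
    (hd : HasDerivAt g g' t) : 0 ≤ g' := by
  rcases lt_or_eq_of_le ht.2 with htT | htT
  · have h := (hd.hasDerivWithinAt (s := Ioi t))
    rw [hasDerivWithinAt_iff_tendsto_slope' (notMem_Ioi.mpr le_rfl)] at h
    refine ge_of_tendsto h ?_
    filter_upwards [Ioo_mem_nhdsGT_of_mem ⟨le_rfl, htT⟩] with s hs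
    have hsI : s ∈ Icc (0:ℝ) T := ⟨ht.1.trans hs.1.le, hs.2.le⟩
    rw [slope_def_field]
    exact div_nonneg (sub_nonneg.2 (hm ht hsI hs.1.le)) (sub_nonneg.2 hs.1.le)
  · have h := (hd.hasDerivWithinAt (s := Iio t))
    rw [hasDerivWithinAt_iff_tendsto_slope' (notMem_Iio.mpr le_rfl)] at h
    refine ge_of_tendsto h ?_
    have h0t : 0 < t := htT ▸ hT
    filter_upwards [Ioo_mem_nhdsLT_of_mem ⟨h0t, le_rfl⟩] with s hs
    have hsI : s ∈ Icc (0:ℝ) T := ⟨hs.1.le, hs.2.le.trans ht.2⟩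
    rw [slope_def_field]
    exact div_nonneg_of_nonpos (sub_nonpos.2 (hm hsI ht hs.2.le))
      (sub_nonpos.2 hs.2.le)


/-- **Dual variable bound under λ-monotone gradient (trajectory form).**
Let `λ > 0` and let `f` be differentiable on the nonnegative orthant with
nonnegative gradient which is λ-monotone: for `0 ≤ u ≤ v` with `u_i, v_i > 0`,
`∇_i f(u)/u_i^λ ≤ ∇_i f(v)/v_i^λ`. Let `ρ > 0`, `T > 0`, and let trajectories
`x, z : [0, T] → ℝ^n` be differentiable with: every coordinate of `x` positive
and nondecreasing, `z 0 = 0`, `z' ≥ 0`, and the coupling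
`ρ · x_i(t) · z_i'(t) = ∇_i f(x(t)) · x_i'(t)`. Then for every `i`:
`z_i(T) ≤ ∇_i f(x(T)) / (λρ)`. -/
theorem stmt_18 {n : ℕ} (lam : ℝ) (hlam : 0 < lam) (f : (Fin n → ℝ) → ℝ)
    (hdiff : ∀ w : Fin n → ℝ, (∀ i, 0 ≤ w i) → DifferentiableAt ℝ f w)
    (hgradnn : ∀ w : Fin n → ℝ, (∀ i, 0 ≤ w i) → ∀ i,
      0 ≤ fderiv ℝ f w (Pi.single i 1))
    (hlammono : ∀ u v : Fin n → ℝ, (∀ j, 0 ≤ u j) → (∀ j, u j ≤ v j) →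
      ∀ i, 0 < u i → 0 < v i →
      fderiv ℝ f u (Pi.single i 1) / u i ^ lam ≤
        fderiv ℝ f v (Pi.single i 1) / v i ^ lam)
    (ρ T : ℝ) (hρ : 0 < ρ) (hT : 0 < T)
    (x z x' z' : ℝ → Fin n → ℝ)
    (hx : ∀ i, ∀ t ∈ Set.Icc (0 : ℝ) T, HasDerivAt (fun s => x s i) (x' t i) t)
    (hz : ∀ i, ∀ t ∈ Set.Icc (0 : ℝ) T, HasDerivAt (fun s => z s i) (z' t i) t)
    (hxpos : ∀ i, ∀ t ∈ Set.Icc (0 : ℝ) T, 0 < x t i)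
    (hxmono : ∀ i, MonotoneOn (fun t => x t i) (Set.Icc (0 : ℝ) T))
    (hz0 : z 0 = 0)
    (hz' : ∀ i, ∀ t ∈ Set.Icc (0 : ℝ) T, 0 ≤ z' t i)
    (hcouple : ∀ i, ∀ t ∈ Set.Icc (0 : ℝ) T,
      ρ * x t i * z' t i = fderiv ℝ f (x t) (Pi.single i 1) * x' t i)
    (i : Fin n) :
    z T i ≤ fderiv ℝ f (x T) (Pi.single i 1) / (lam * ρ) := by
  have hTmem : T ∈ Set.Icc (0:ℝ) T := ⟨hT.le, le_rfl⟩
  set g : ℝ → ℝ := fun t => fderiv ℝ f (x t) (Pi.single i 1) with hg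
  have hxTpos : 0 < x T i := hxpos i T hTmem
  have hxTlam : 0 < x T i ^ lam := Real.rpow_pos_of_pos hxTpos lam
  have hgT0 : 0 ≤ g T := hgradnn (x T) (fun j => (hxpos j T hTmem).le) i
  set C : ℝ := g T / (lam * ρ * x T i ^ lam) with hC
  have hC0 : 0 ≤ C := div_nonneg hgT0 (by positivity)
  -- derivative nonnegativity of x'
  have hx'0 : ∀ t ∈ Set.Icc (0:ℝ) T, 0 ≤ x' t i := fun t ht =>
    aux_deriv_nonneg_of_monotoneOn hT ht (hxmono i) (hx i t ht)
  -- ψ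
  set ψ : ℝ → ℝ := fun t => C * x t i ^ lam - z t i with hψ
  have hψd : ∀ t ∈ Set.Icc (0:ℝ) T,
      HasDerivAt ψ (C * (x' t i * lam * x t i ^ (lam - 1)) - z' t i) t := by
    intro t ht
    exact (((hx i t ht).rpow_const (Or.inl (hxpos i t ht).ne')).const_mul C).sub
      (hz i t ht)
  have hψ'0 : ∀ t ∈ Set.Icc (0:ℝ) T,
      0 ≤ C * (x' t i * lam * x t i ^ (lam - 1)) - z' t i := by
    intro t ht
    have hxtpos : 0 < x t i := hxpos i t ht
    have hxtlam : 0 < x t i ^ lam := Real.rpow_pos_of_pos hxtpos lam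
    have key : g t / x t i ^ lam ≤ g T / x T i ^ lam :=
      hlammono (x t) (x T) (fun j => (hxpos j t ht).le)
        (fun j => hxmono j ht hTmem ht.2) i hxtpos hxTpos
    have h1 : g t * x T i ^ lam ≤ g T * x t i ^ lam :=
      (div_le_div_iff₀ hxtlam hxTlam).mp key
    have hz'val : z' t i = g t * x' t i / (ρ * x t i) := by
      have := hcouple i t ht
      field_simp at this ⊢
      linarith [this]
    rw [sub_nonneg, hz'val]
    rw [Real.rpow_sub hxtpos, Real.rpow_one]
    rw [div_le_iff₀ (by positivity)]
    have h2 : g t * x' t i * x T i ^ lam ≤ g T * x t i ^ lam * x' t i :=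
      by nlinarith [mul_le_mul_of_nonneg_right h1 (hx'0 t ht)]
    have hCval : C * (x' t i * lam * (x t i ^ lam / x t i)) * (ρ * x t i)
        = (g T * x t i ^ lam * x' t i) / (x T i ^ lam) := by
      rw [hC]; field_simp
    rw [hCval, le_div_iff₀ hxTlam]
    linarith [h2]
  -- monotonicity of ψ on [0,T]
  have hcont : ContinuousOn ψ (Set.Icc (0:ℝ) T) := fun t ht =>
    ((hψd t ht).continuousAt).continuousWithinAt
  have hmono : MonotoneOn ψ (Set.Icc (0:ℝ) T) := by
    apply monotoneOn_of_deriv_nonneg (convex_Icc 0 T) hcont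
    · intro t ht
      rw [interior_Icc] at ht
      exact ((hψd t ⟨ht.1.le, ht.2.le⟩).differentiableAt).differentiableWithinAt
    · intro t ht
      rw [interior_Icc] at ht
      have ht' : t ∈ Set.Icc (0:ℝ) T := ⟨ht.1.le, ht.2.le⟩
      rw [(hψd t ht').deriv]
      exact hψ'0 t ht'
  have h0mem : (0:ℝ) ∈ Set.Icc (0:ℝ) T := ⟨le_rfl, hT.le⟩
  have hψ0T : ψ 0 ≤ ψ T := hmono h0mem hTmem hT.le
  have hz00 : z 0 i = 0 := by rw [hz0]; rfl
  have hx0lam : 0 ≤ C * x 0 i ^ lam :=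
    mul_nonneg hC0 (Real.rpow_pos_of_pos (hxpos i 0 h0mem) lam).le
  have hfin : C * x T i ^ lam = g T / (lam * ρ) := by
    rw [hC]; field_simp
  simp only [hψ, hz00, sub_zero] at hψ0T
  calc z T i ≤ C * x T i ^ lam - C * x 0 i ^ lam := by linarith
    _ ≤ C * x T i ^ lam := by linarith
    _ = g T / (lam * ρ) := hfin
end

section
/- Properties of the ℓ_p-norm-type cost composed with coordinate powers: Let p ≥ 2, 0 < λ < 1, and c_1, …, c_n ≥ 0. Define h : ℝ^n_{>0} → ℝ by h(x) := ( ∑_{i=1}^n c_i · x_i^{1+λ} )^{p/(1+λ)}. Then: (i) for every x in the open positive orthant, ⟨∇h(x), x⟩ = p · h(x); and (ii) h has λ-monotone gradient, i.e., for each i and all u ≤ v in the open positive orthant, ∇_i h(u)/u_i^λ ≤ ∇_i h(v)/v_i^λ. -/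
open Real ContinuousLinearMap Finset

lemma aux_key {n : ℕ} (lam r : ℝ) (hlam : 0 < 1 + lam)
    (c x : Fin n → ℝ) (hx : ∀ i, 0 < x i)
    (hS : 0 < ∑ j, c j * x j ^ (1 + lam)) (i : Fin n) :
    fderiv ℝ (fun y : Fin n → ℝ => (∑ j, c j * y j ^ (1 + lam)) ^ r) x (Pi.single i 1)
      = r * (∑ j, c j * x j ^ (1 + lam)) ^ (r - 1) * (c i * ((1 + lam) * x i ^ lam)) := by
  have hSder : HasFDerivAt (fun y : Fin n → ℝ => ∑ j, c j * y j ^ (1 + lam))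
      (∑ j, (c j * ((1 + lam) * x j ^ lam)) • (ContinuousLinearMap.proj j :
        (Fin n → ℝ) →L[ℝ] ℝ)) x := by
    apply HasFDerivAt.fun_sum
    intro j _
    have h1 : HasDerivAt (fun t : ℝ => t ^ (1 + lam)) ((1 + lam) * x j ^ ((1 + lam) - 1)) (x j) :=
      Real.hasDerivAt_rpow_const (Or.inl (hx j).ne')
    have h2 : HasFDerivAt (fun y : Fin n → ℝ => y j)
        ((ContinuousLinearMap.proj j : (Fin n → ℝ) →L[ℝ] ℝ)) x :=
      ContinuousLinearMap.hasFDerivAt (ContinuousLinearMap.proj j : (Fin n → ℝ) →L[ℝ] ℝ)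
    have h3 := (h1.comp_hasFDerivAt x h2).const_mul (c j)
    have he : (1:ℝ) + lam - 1 = lam := by ring
    rw [he, smul_smul] at h3
    exact h3
  have houter : HasDerivAt (fun t : ℝ => t ^ r)
      (r * (∑ j, c j * x j ^ (1 + lam)) ^ (r - 1)) (∑ j, c j * x j ^ (1 + lam)) :=
    Real.hasDerivAt_rpow_const (Or.inl hS.ne')
  have hcomp := houter.comp_hasFDerivAt x hSder
  simp only [Function.comp_def] at hcomp
  rw [hcomp.fderiv]
  simp only [ContinuousLinearMap.coe_smul', Pi.smul_apply, ContinuousLinearMap.coe_sum',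
    Finset.sum_apply, ContinuousLinearMap.smul_apply, ContinuousLinearMap.proj_apply,
    smul_eq_mul]
  congr 1
  rw [Finset.sum_eq_single i]
  · simp
  · intro b _ hb; simp [Pi.single_apply, hb]
  · simp



/-- **Properties of the ℓ_p-norm-type cost composed with coordinate powers.**
Let `p ≥ 2`, `0 < λ < 1`, `c_i ≥ 0`, and
`h(x) := (∑_i c_i x_i^{1+λ})^{p/(1+λ)}`. Then on the open positive orthant:
(i) `⟨∇h(x), x⟩ = p · h(x)`; and (ii) `∇h` is λ-monotone: for `u ≤ v` with
all coordinates positive, `∇_i h(u)/u_i^λ ≤ ∇_i h(v)/v_i^λ`. -/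
theorem stmt_19 {n : ℕ} (p lam : ℝ) (hp : 2 ≤ p) (hlam0 : 0 < lam)
    (hlam1 : lam < 1) (c : Fin n → ℝ) (hc : ∀ i, 0 ≤ c i)
    (h : (Fin n → ℝ) → ℝ)
    (hh : h = fun x => (∑ i, c i * x i ^ (1 + lam)) ^ (p / (1 + lam))) :
    (∀ x : Fin n → ℝ, (∀ i, 0 < x i) →
        ∑ i, fderiv ℝ h x (Pi.single i 1) * x i = p * h x) ∧
      (∀ u v : Fin n → ℝ, (∀ i, 0 < u i) → (∀ i, u i ≤ v i) → ∀ i,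
        fderiv ℝ h u (Pi.single i 1) / u i ^ lam ≤
          fderiv ℝ h v (Pi.single i 1) / v i ^ lam) := by
  have h1lam : (0:ℝ) < 1 + lam := by linarith
  set r := p / (1 + lam) with hr
  have hr1 : 1 ≤ r := (one_le_div h1lam).mpr (by linarith)
  subst hh
  by_cases hcz : ∀ i, c i = 0
  · have hconst : (fun x : Fin n → ℝ => (∑ i, c i * x i ^ (1 + lam)) ^ r)
        = fun _ => (0:ℝ) := by
      funext x
      rw [Finset.sum_eq_zero (fun i _ => by rw [hcz i]; ring)]
      exact Real.zero_rpow (by positivity)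
    rw [hconst]
    refine ⟨fun x hx => by simp, fun u v hu huv i => by simp⟩
  · push_neg at hcz
    obtain ⟨i0, hi0⟩ := hcz
    have hi0' : 0 < c i0 := (hc i0).lt_of_ne (Ne.symm hi0)
    have hSpos : ∀ x : Fin n → ℝ, (∀ i, 0 < x i) → 0 < ∑ j, c j * x j ^ (1 + lam) := by
      intro x hx
      refine Finset.sum_pos' (fun j _ => mul_nonneg (hc j)
        (Real.rpow_pos_of_pos (hx j) _).le) ⟨i0, Finset.mem_univ _,
        mul_pos hi0' (Real.rpow_pos_of_pos (hx i0) _)⟩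
    constructor
    · intro x hx
      have hS := hSpos x hx
      calc ∑ i, fderiv ℝ (fun y : Fin n → ℝ => (∑ j, c j * y j ^ (1 + lam)) ^ r) x
              (Pi.single i 1) * x i
          = ∑ i, r * (∑ j, c j * x j ^ (1 + lam)) ^ (r - 1)
              * (c i * ((1 + lam) * x i ^ lam)) * x i := by
            refine Finset.sum_congr rfl fun i _ => ?_
            rw [aux_key lam r h1lam c x hx hS i]
        _ = r * (1 + lam) * (∑ j, c j * x j ^ (1 + lam)) ^ (r - 1)
              * ∑ i, c i * (x i ^ lam * x i) := by
            rw [Finset.mul_sum]; refine Finset.sum_congr rfl fun i _ => ?_; ring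
        _ = p * (∑ j, c j * x j ^ (1 + lam)) ^ r := by
            have h1 : ∀ i, x i ^ lam * x i = x i ^ (1 + lam) := fun i => by
              rw [show (1:ℝ) + lam = lam + 1 by ring, Real.rpow_add_one (hx i).ne' lam]
            simp_rw [h1]
            rw [hr, div_mul_cancel₀ p h1lam.ne']
            rw [mul_assoc, ← Real.rpow_add_one hS.ne' (r - 1)]
            ring_nf
            rw [hr, div_eq_mul_inv]
    · intro u v hu huv i
      have hv : ∀ i, 0 < v i := fun i => (hu i).trans_le (huv i)
      have hSu := hSpos u hu
      have hSv := hSpos v hv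
      have hSuv : ∑ j, c j * u j ^ (1 + lam) ≤ ∑ j, c j * v j ^ (1 + lam) :=
        Finset.sum_le_sum fun j _ => mul_le_mul_of_nonneg_left
          (Real.rpow_le_rpow (hu j).le (huv j) h1lam.le) (hc j)
      rw [aux_key lam r h1lam c u hu hSu i, aux_key lam r h1lam c v hv hSv i]
      have hcancel : ∀ x : Fin n → ℝ, (∀ i, 0 < x i) → ∀ S : ℝ,
          r * S * (c i * ((1 + lam) * x i ^ lam)) / x i ^ lam
            = r * S * (c i * (1 + lam)) := by
        intro x hx S
        have : x i ^ lam ≠ 0 := (Real.rpow_pos_of_pos (hx i) _).ne'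
        field_simp
      rw [hcancel u hu, hcancel v hv]
      have hpow : (∑ j, c j * u j ^ (1 + lam)) ^ (r - 1)
          ≤ (∑ j, c j * v j ^ (1 + lam)) ^ (r - 1) :=
        Real.rpow_le_rpow hSu.le hSuv (by linarith)
      have hrpos : 0 < r := by linarith
      have hfac : 0 ≤ c i * (1 + lam) := mul_nonneg (hc i) h1lam.le
      nlinarith [mul_le_mul_of_nonneg_left hpow (mul_nonneg hrpos.le hfac)]
end
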